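/- arXiv:2304.03073 — 6 statements merged into one kernel-verified Lean document; each statement's English description precedes it below -/
import Mathlib

section
/- Under hypotheses (Lip) and (F), if (μ_t)_{0≤t≤T} and (ν_t)_{0≤t≤T} are measure solutions of the pure selection equation with nonnegative initial data μ₀ and ν₀ respectively, then, setting L(T) := 2·sup_{t∈[0,T]} ( (‖μ₀‖_TV + ‖ν₀‖_TV) e^{Ft} k((‖μ₀‖_TV + ‖ν₀‖_TV) e^{Ft}) + ‖Σ[0]‖_∞ ), one has ‖μ_t − ν_t‖_TV ≤ e^{L(T)t} ‖μ₀ − ν₀‖_TV for all t ∈ [0,T]. -/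
open MeasureTheory Filter Set

/-- Total variation distance between two (Borel) measures, `‖μ - ν‖_TV`. -/
noncomputable def tvDist {Y : Type*} [MeasurableSpace Y] (μ ν : Measure Y) : ℝ :=
  ((μ - ν) Set.univ + (ν - μ) Set.univ).toReal

section TV
set_option linter.unusedSectionVars false
variable {Y : Type*} [MeasurableSpace Y] (α β : Measure Y) [IsFiniteMeasure α] [IsFiniteMeasure β]

lemma tvDist_nonneg : 0 ≤ tvDist α β := ENNReal.toReal_nonneg

lemma tvDist_comm : tvDist α β = tvDist β α := by
  unfold tvDist; rw [add_comm]

variable {α β}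

lemma sub_univ_of_hahn {s : Set Y} (hs : MeasurableSet s)
    (h1 : ∀ t, MeasurableSet t → t ⊆ s → β t ≤ α t)
    (h2 : ∀ t, MeasurableSet t → t ⊆ sᶜ → α t ≤ β t) :
    (α - β) Set.univ = α s - β s := by
  have hsc : (α - β) sᶜ = 0 := by
    apply Measure.sub_apply_eq_zero_of_restrict_le_restrict _ hs.compl
    refine Measure.le_iff.mpr fun t ht => ?_
    rw [Measure.restrict_apply ht, Measure.restrict_apply ht]
    exact h2 _ (ht.inter hs.compl) inter_subset_right
  have hrle : β.restrict s ≤ α.restrict s := by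
    refine Measure.le_iff.mpr fun t ht => ?_
    rw [Measure.restrict_apply ht, Measure.restrict_apply ht]
    exact h1 _ (ht.inter hs) inter_subset_right
  have hu : (α - β) Set.univ = (α - β) s + (α - β) sᶜ :=
    (measure_add_measure_compl hs).symm
  rw [hu, hsc, add_zero, ← Measure.restrict_apply_self,
    Measure.restrict_sub_eq_restrict_sub_restrict hs,
    Measure.sub_apply hs hrle, Measure.restrict_apply_self, Measure.restrict_apply_self]

/-- Hahn-type representation of the total variation distance. -/
lemma exists_hahn_tv : ∃ s : Set Y, MeasurableSet s ∧
    (∀ t, MeasurableSet t → t ⊆ s → β t ≤ α t) ∧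
    (∀ t, MeasurableSet t → t ⊆ sᶜ → α t ≤ β t) ∧
    tvDist α β = ((α s).toReal - (β s).toReal) + ((β sᶜ).toReal - (α sᶜ).toReal) := by
  obtain ⟨s, hs, h1, h2⟩ := hahn_decomposition (μ:=α) (ν:=β)
  refine ⟨s, hs, h1, h2, ?_⟩
  have e1 : (α - β) Set.univ = α s - β s := sub_univ_of_hahn hs h1 h2
  have e2 : (β - α) Set.univ = β sᶜ - α sᶜ := by
    apply sub_univ_of_hahn hs.compl
    · exact h2
    · intro t ht hts; exact h1 t ht (by simpa using hts)
  have hba : β s ≤ α s := h1 s hs subset_rfl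
  have hab : α sᶜ ≤ β sᶜ := h2 sᶜ hs.compl subset_rfl
  unfold tvDist
  rw [e1, e2, ENNReal.toReal_add, ENNReal.toReal_sub_of_le hba (measure_ne_top _ _),
    ENNReal.toReal_sub_of_le hab (measure_ne_top _ _)]
  · exact (ne_top_of_le_ne_top (measure_ne_top _ _) tsub_le_self)
  · exact (ne_top_of_le_ne_top (measure_ne_top _ _) tsub_le_self)

end TV

section TV2
set_option linter.unusedSectionVars false
variable {Y : Type*} [MeasurableSpace Y] {α β : Measure Y} [IsFiniteMeasure α] [IsFiniteMeasure β]
variable {g : Y → ℝ} {C : ℝ}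

lemma integrable_of_bounded (hg : Measurable g) (hb : ∀ x, |g x| ≤ C) : Integrable g α :=
  Integrable.mono' (integrable_const C) hg.aestronglyMeasurable
    (ae_of_all _ fun x => by simpa using hb x)

lemma integral_sub_le_core {ρ τ : Measure Y} [IsFiniteMeasure ρ] [IsFiniteMeasure τ]
    (hle : ρ ≤ τ) (hg : Measurable g) (hb : ∀ x, |g x| ≤ C) :
    ∫ x, g x ∂τ - ∫ x, g x ∂ρ ≤ C * ((τ Set.univ).toReal - (ρ Set.univ).toReal) := by
  have hdec : (τ - ρ) + ρ = τ := Measure.sub_add_cancel_of_le hle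
  have hτ : ∫ x, g x ∂τ = ∫ x, g x ∂(τ - ρ) + ∫ x, g x ∂ρ := by
    conv_lhs => rw [← hdec]
    exact integral_add_measure (integrable_of_bounded hg hb) (integrable_of_bounded hg hb)
  have huniv : ((τ - ρ) Set.univ).toReal = (τ Set.univ).toReal - (ρ Set.univ).toReal := by
    rw [Measure.sub_apply MeasurableSet.univ hle,
      ENNReal.toReal_sub_of_le (hle Set.univ) (measure_ne_top _ _)]
  have : ∫ x, g x ∂(τ - ρ) ≤ ∫ x, (fun _ => C) x ∂(τ - ρ) := by
    refine integral_mono (integrable_of_bounded hg hb) (integrable_const C) fun x => ?_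
    exact (abs_le.mp (hb x)).2
  rw [hτ]
  simp only [integral_const, smul_eq_mul] at this ⊢
  rw [measureReal_def, huniv] at this
  linarith [this]

lemma integral_sub_le_tvDist (hg : Measurable g) (hb : ∀ x, |g x| ≤ C) :
    ∫ x, g x ∂α - ∫ x, g x ∂β ≤ C * tvDist α β := by
  obtain ⟨s, hs, h1, h2, htv⟩ := exists_hahn_tv (α := α) (β := β)
  have hle1 : β.restrict s ≤ α.restrict s := by
    refine Measure.le_iff.mpr fun t ht => ?_
    rw [Measure.restrict_apply ht, Measure.restrict_apply ht]
    exact h1 _ (ht.inter hs) inter_subset_right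
  have hle2 : α.restrict sᶜ ≤ β.restrict sᶜ := by
    refine Measure.le_iff.mpr fun t ht => ?_
    rw [Measure.restrict_apply ht, Measure.restrict_apply ht]
    exact h2 _ (ht.inter hs.compl) inter_subset_right
  have e1 : ∫ x in s, g x ∂α - ∫ x in s, g x ∂β
      ≤ C * ((α s).toReal - (β s).toReal) := by
    have := integral_sub_le_core (ρ := β.restrict s) (τ := α.restrict s) hle1 hg hb
    simpa [Measure.restrict_apply_univ] using this
  have e2 : ∫ x in sᶜ, g x ∂α - ∫ x in sᶜ, g x ∂β
      ≤ C * ((β sᶜ).toReal - (α sᶜ).toReal) := by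
    have := integral_sub_le_core (ρ := α.restrict sᶜ) (τ := β.restrict sᶜ) hle2
      (g := fun x => -g x) (hg.neg) (fun x => by simpa using hb x)
    simp only [integral_neg, Measure.restrict_apply_univ] at this
    linarith [this]
  have hα : ∫ x in s, g x ∂α + ∫ x in sᶜ, g x ∂α = ∫ x, g x ∂α :=
    integral_add_compl hs (integrable_of_bounded hg hb)
  have hβ : ∫ x in s, g x ∂β + ∫ x in sᶜ, g x ∂β = ∫ x, g x ∂β :=
    integral_add_compl hs (integrable_of_bounded hg hb)
  rw [htv]
  linarith [e1, e2]

lemma abs_integral_sub_le_tvDist (hg : Measurable g) (hb : ∀ x, |g x| ≤ C) :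
    |∫ x, g x ∂α - ∫ x, g x ∂β| ≤ C * tvDist α β := by
  rw [abs_le]
  constructor
  · have := integral_sub_le_tvDist (α := β) (β := α) hg hb
    rw [tvDist_comm β α] at this; linarith
  · exact integral_sub_le_tvDist hg hb

lemma exists_rep_tvDist : ∃ f : Y → ℝ, Measurable f ∧ (∀ x, |f x| ≤ 1) ∧
    tvDist α β = ∫ x, f x ∂α - ∫ x, f x ∂β := by
  obtain ⟨s, hs, h1, h2, htv⟩ := exists_hahn_tv (α := α) (β := β)
  refine ⟨fun x => s.indicator (fun _ => (1:ℝ)) x - sᶜ.indicator (fun _ => (1:ℝ)) x,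
    (measurable_const.indicator hs).sub (measurable_const.indicator hs.compl),
    fun x => ?_, ?_⟩
  · by_cases hx : x ∈ s <;> simp [Set.indicator_apply, hx]
  · have key : ∀ (m : Measure Y), IsFiniteMeasure m →
        ∫ x, (s.indicator (fun _ => (1:ℝ)) x - sᶜ.indicator (fun _ => (1:ℝ)) x) ∂m
          = (m s).toReal - (m sᶜ).toReal := by
      intro m hm
      rw [integral_sub, integral_indicator_const (1:ℝ) hs, integral_indicator_const (1:ℝ) hs.compl]
      · simp; rfl
      · exact integrable_of_bounded (C := 1) (measurable_const.indicator hs)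
          (fun x => by by_cases hx : x ∈ s <;> simp [Set.indicator_apply, hx])
      · exact integrable_of_bounded (C := 1) (measurable_const.indicator hs.compl)
          (fun x => by by_cases hx : x ∈ sᶜ <;> simp [Set.indicator_apply, hx])
    rw [key α ‹_›, key β ‹_›, htv]
    ring

lemma tvDist_triangle (γ : Measure Y) [IsFiniteMeasure γ] :
    tvDist α γ ≤ tvDist α β + tvDist β γ := by
  obtain ⟨f, hf, hb, hrep⟩ := exists_rep_tvDist (α := α) (β := γ)
  have h1 : ∫ x, f x ∂α - ∫ x, f x ∂β ≤ 1 * tvDist α β := integral_sub_le_tvDist hf hb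
  have h2 : ∫ x, f x ∂β - ∫ x, f x ∂γ ≤ 1 * tvDist β γ := integral_sub_le_tvDist hf hb
  rw [hrep]; linarith

lemma tvDist_zero_right : tvDist α 0 = (α Set.univ).toReal := by
  unfold tvDist
  have h0 : α - (0 : Measure Y) = α := by
    refine le_antisymm Measure.sub_le ?_
    rw [Measure.sub_def]
    exact le_sInf fun d hd => by simpa using hd
  rw [h0, Measure.zero_sub]
  simp

end TV2

section Gronwall

lemma exists_cont_ext {φ : ℝ → ℝ} {T : ℝ} (hT : 0 ≤ T) (h : ContinuousOn φ (Icc 0 T)) :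
    ∃ Φ : ℝ → ℝ, Continuous Φ ∧ (∀ t ∈ Icc (0:ℝ) T, Φ t = φ t) ∧
      (∀ u, ∃ t, t ∈ Icc (0:ℝ) T ∧ Φ u = φ t) := by
  have hmem : ∀ u : ℝ, max 0 (min u T) ∈ Icc (0:ℝ) T := fun u =>
    ⟨le_max_left _ _, max_le hT (min_le_right _ _)⟩
  refine ⟨fun u => φ (max 0 (min u T)), ?_, ?_, fun u => ⟨_, hmem u, rfl⟩⟩
  · exact h.comp_continuous (continuous_const.max (continuous_id.min continuous_const)) hmem
  · intro t ht
    dsimp only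
    rw [min_eq_left ht.2, max_eq_right ht.1]

lemma gronwall_integral {φ : ℝ → ℝ} {c L T : ℝ} (hT : 0 ≤ T) (hc : 0 ≤ c) (hL : 0 ≤ L)
    (hφc : ContinuousOn φ (Icc 0 T)) (hφ0 : ∀ t ∈ Icc (0:ℝ) T, 0 ≤ φ t)
    (key : ∀ t ∈ Icc (0:ℝ) T, φ t ≤ c + ∫ s in (0:ℝ)..t, L * φ s) :
    ∀ t ∈ Icc (0:ℝ) T, φ t ≤ c * Real.exp (L * t) := by
  obtain ⟨Φ, hΦc, hΦeq, hΦim⟩ := exists_cont_ext hT hφc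
  have hΦ0 : ∀ u, 0 ≤ Φ u := fun u => by
    obtain ⟨t, ht, he⟩ := hΦim u; rw [he]; exact hφ0 t ht
  set ψ : ℝ → ℝ := fun u => c + ∫ s in (0:ℝ)..u, L * Φ s with hψdef
  have hint : Continuous fun s => L * Φ s := continuous_const.mul hΦc
  have hder : ∀ u, HasDerivAt ψ (L * Φ u) u := fun u =>
    ((hint.integral_hasStrictDerivAt 0 u).hasDerivAt).const_add c
  have hcong : ∀ t ∈ Icc (0:ℝ) T, (∫ s in (0:ℝ)..t, L * Φ s) = ∫ s in (0:ℝ)..t, L * φ s := by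
    intro t ht
    refine intervalIntegral.integral_congr fun s hs => ?_
    rw [uIcc_of_le ht.1] at hs
    rw [hΦeq s ⟨hs.1, hs.2.trans ht.2⟩]
  have hφψ : ∀ t ∈ Icc (0:ℝ) T, φ t ≤ ψ t := by
    intro t ht
    have := key t ht
    calc φ t ≤ c + ∫ s in (0:ℝ)..t, L * φ s := this
      _ = ψ t := by show _ = c + _; rw [hcong t ht]
  have hψ0 : ∀ u ∈ Icc (0:ℝ) T, 0 ≤ ψ u := by
    intro u hu
    have : 0 ≤ ∫ s in (0:ℝ)..u, L * Φ s :=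
      intervalIntegral.integral_nonneg hu.1 fun s _ => mul_nonneg hL (hΦ0 s)
    have : (0:ℝ) + 0 ≤ ψ u := add_le_add hc this
    simpa using this
  have hmain := norm_le_gronwallBound_of_norm_deriv_right_le (f := ψ)
    (f' := fun u => L * Φ u) (δ := c) (K := L) (ε := 0) (a := 0) (b := T)
    (Continuous.continuousOn (by fun_prop))
    (fun u _ => (hder u).hasDerivWithinAt)
    (by simp [hψdef, abs_of_nonneg hc])
    (fun u hu => by
      have hu' : u ∈ Icc (0:ℝ) T := ⟨hu.1, le_of_lt hu.2⟩
      rw [Real.norm_eq_abs, Real.norm_eq_abs, abs_of_nonneg (mul_nonneg hL (hΦ0 u)),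
        abs_of_nonneg (hψ0 u hu'), hΦeq u hu']
      have := hφψ u hu'
      nlinarith [hφ0 u hu'])
  intro t ht
  have := hmain t ht
  rw [Real.norm_eq_abs, abs_of_nonneg (hψ0 t ht), gronwallBound_ε0, sub_zero] at this
  exact (hφψ t ht).trans this

end Gronwall

/-- `f` is a bounded Borel function. -/
def IsBoundedBorel {Y : Type*} [MeasurableSpace Y] (f : Y → ℝ) : Prop :=
  Measurable f ∧ ∃ C, ∀ x, |f x| ≤ C

/-- Measure solution of the pure selection equation on `[0,T]` with initial datum `μ₀`:
a family in `C([0,T]; M(X))` (continuity in total variation norm), such that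
`t ↦ ⟨μ_t, f⟩` is continuous for bounded continuous `f`, and the mild equation
`⟨μ_t, f⟩ = ⟨μ₀, f⟩ + ∫_0^t ⟨μ_s, Σ[μ_s] f⟩ ds` holds for bounded Borel `f`. -/
def IsMeasureSolutionOn {Y : Type*} [MeasurableSpace Y] [TopologicalSpace Y]
    (Sig : FiniteMeasure Y → Y → ℝ) (μ₀ : FiniteMeasure Y)
    (μ : ℝ → FiniteMeasure Y) (T : ℝ) : Prop :=
  μ 0 = μ₀ ∧
  (∀ t₀ ∈ Set.Icc (0:ℝ) T,
    Tendsto (fun t => tvDist (μ t : Measure Y) (μ t₀ : Measure Y))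
      (nhdsWithin t₀ (Set.Icc 0 T)) (nhds 0)) ∧
  (∀ f : BoundedContinuousFunction Y ℝ,
    ContinuousOn (fun t => ∫ x, f x ∂(μ t : Measure Y)) (Set.Icc 0 T)) ∧
  (∀ f : Y → ℝ, IsBoundedBorel f → ∀ t ∈ Set.Icc (0:ℝ) T,
    ∫ x, f x ∂(μ t : Measure Y)
      = ∫ x, f x ∂(μ₀ : Measure Y)
        + ∫ s in (0:ℝ)..t, ∫ x, Sig (μ s) x * f x ∂(μ s : Measure Y))

/-- Hypothesis (Lip): for every `r > 0` there is `k r > 0`, with `k` locally bounded on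
`(0,∞)`, such that `‖Σ[μ] - Σ[ν]‖_∞ ≤ k r * ‖μ - ν‖_TV` whenever `‖μ‖_TV, ‖ν‖_TV ≤ r`. -/
def HypLip {Y : Type*} [MeasurableSpace Y] (Sig : FiniteMeasure Y → Y → ℝ) : Prop :=
  ∃ k : ℝ → ℝ, (∀ r > 0, 0 < k r) ∧ (∀ R > 0, ∃ K, ∀ r ∈ Set.Ioc (0:ℝ) R, k r ≤ K) ∧
    ∀ r > 0, ∀ μ ν : FiniteMeasure Y, (μ.mass : ℝ) ≤ r → (ν.mass : ℝ) ≤ r →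
      ∀ x, |Sig μ x - Sig ν x| ≤ k r * tvDist (μ : Measure Y) (ν : Measure Y)

/-- Hypothesis (F) with constant `F`: `⟨μ, Σ[μ]⟩ ≤ F·μ(X)` for all finite nonnegative `μ`. -/
def HypF {Y : Type*} [MeasurableSpace Y] (Sig : FiniteMeasure Y → Y → ℝ) (F : ℝ) : Prop :=
  ∀ μ : FiniteMeasure Y, ∫ x, Sig μ x ∂(μ : Measure Y) ≤ F * (μ.mass : ℝ)

section Sol
set_option linter.unusedSectionVars false
variable {Y : Type*} [MeasurableSpace Y] [TopologicalSpace Y]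

lemma mass_toReal (σ : FiniteMeasure Y) : (((σ : Measure Y)) Set.univ).toReal = (σ.mass : ℝ) := by
  rw [← FiniteMeasure.ennreal_mass, ENNReal.coe_toReal]

lemma tvDist_fm_zero (σ : FiniteMeasure Y) :
    tvDist (σ : Measure Y) ((0 : FiniteMeasure Y) : Measure Y) = (σ.mass : ℝ) := by
  rw [FiniteMeasure.toMeasure_zero, tvDist_zero_right, mass_toReal]

lemma abs_mass_sub_le (α β : FiniteMeasure Y) :
    |(α.mass : ℝ) - (β.mass : ℝ)| ≤ tvDist (α : Measure Y) (β : Measure Y) := by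
  have := abs_integral_sub_le_tvDist (α := (α : Measure Y)) (β := (β : Measure Y))
    (g := fun _ => (1:ℝ)) (C := 1) measurable_const (fun x => by simp)
  simpa [integral_const, smul_eq_mul, mass_toReal, FiniteMeasure.mass] using this

/-- Continuity on `[0,T]` of the total mass of a TV-continuous family. -/
lemma cont_mass {σ : ℝ → FiniteMeasure Y} {T : ℝ}
    (hcont : ∀ t₀ ∈ Set.Icc (0:ℝ) T,
      Tendsto (fun t => tvDist (σ t : Measure Y) (σ t₀ : Measure Y))
        (nhdsWithin t₀ (Set.Icc 0 T)) (nhds 0)) :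
    ContinuousOn (fun s => ((σ s).mass : ℝ)) (Set.Icc 0 T) := by
  intro t₀ ht₀
  have h1 : Tendsto (fun s => ((σ s).mass : ℝ) - ((σ t₀).mass : ℝ))
      (nhdsWithin t₀ (Set.Icc 0 T)) (nhds 0) := by
    apply squeeze_zero_norm' _ (hcont t₀ ht₀)
    exact Eventually.of_forall fun s => abs_mass_sub_le (σ s) (σ t₀)
  have h2 := h1.add_const ((σ t₀).mass : ℝ)
  simp only [sub_add_cancel, zero_add] at h2
  exact h2

end Sol


section Cont
set_option linter.unusedSectionVars false
variable {Y : Type*} [MeasurableSpace Y] [TopologicalSpace Y]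

/-- Continuity of `s ↦ ∫ Sig (σ s) · f dσ s` for a TV-continuous family. -/
lemma cont_pairing {σ : ℝ → FiniteMeasure Y} {T R : ℝ} {Sig : FiniteMeasure Y → Y → ℝ}
    {kR : ℝ} (hkR : 0 ≤ kR) (hR0 : 0 ≤ R)
    (hB0 : ∃ C, ∀ x, |Sig 0 x| ≤ C)
    (hSigmeas : ∀ μ', Measurable (Sig μ'))
    (hLipR : ∀ μ' ν' : FiniteMeasure Y, (μ'.mass : ℝ) ≤ R → (ν'.mass : ℝ) ≤ R →
      ∀ x, |Sig μ' x - Sig ν' x| ≤ kR * tvDist (μ' : Measure Y) (ν' : Measure Y))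
    (hmass : ∀ s ∈ Set.Icc (0:ℝ) T, ((σ s).mass : ℝ) ≤ R)
    (hcont : ∀ t₀ ∈ Set.Icc (0:ℝ) T,
      Tendsto (fun t => tvDist (σ t : Measure Y) (σ t₀ : Measure Y))
        (nhdsWithin t₀ (Set.Icc 0 T)) (nhds 0))
    {f : Y → ℝ} (hf : Measurable f) (hfb : ∀ x, |f x| ≤ 1) :
    ContinuousOn (fun s => ∫ x, Sig (σ s) x * f x ∂(σ s : Measure Y)) (Set.Icc 0 T) := by
  obtain ⟨C0, hC0⟩ := hB0
  set B : ℝ := max C0 0 + kR * R with hBdef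
  have hB0' : 0 ≤ B := by positivity
  have hzm : (((0 : FiniteMeasure Y)).mass : ℝ) ≤ R := by
    simp [FiniteMeasure.zero_mass, hR0]
  have hSb : ∀ s ∈ Set.Icc (0:ℝ) T, ∀ x, |Sig (σ s) x| ≤ B := by
    intro s hs x
    have h1 := hLipR (σ s) 0 (hmass s hs) hzm x
    rw [tvDist_fm_zero] at h1
    have h2 : |Sig (σ s) x| ≤ |Sig (σ s) x - Sig 0 x| + |Sig 0 x| := by
      have := abs_sub_abs_le_abs_sub (Sig (σ s) x) (Sig 0 x); linarith [abs_nonneg (Sig 0 x)]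
    have h3 : kR * ((σ s).mass : ℝ) ≤ kR * R := by
      apply mul_le_mul_of_nonneg_left (hmass s hs) hkR
    calc |Sig (σ s) x| ≤ |Sig (σ s) x - Sig 0 x| + |Sig 0 x| := h2
      _ ≤ kR * R + max C0 0 := by
          have := hC0 x
          have := le_max_left C0 0
          linarith
      _ = B := by rw [hBdef]; ring
  -- bounded measurable integrands
  have hmulb : ∀ s ∈ Set.Icc (0:ℝ) T, ∀ x, |Sig (σ s) x * f x| ≤ B := by
    intro s hs x
    rw [abs_mul]
    calc |Sig (σ s) x| * |f x| ≤ B * 1 :=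
          mul_le_mul (hSb s hs x) (hfb x) (abs_nonneg _) hB0'
      _ = B := mul_one B
  intro t₀ ht₀
  set A : ℝ → ℝ := fun s => ∫ x, Sig (σ s) x * f x ∂(σ s : Measure Y) with hAdef
  have hkey : ∀ s ∈ Set.Icc (0:ℝ) T,
      |A s - A t₀| ≤ (B + kR * R) * tvDist (σ s : Measure Y) (σ t₀ : Measure Y) := by
    intro s hs
    set g : Y → ℝ := fun x => Sig (σ s) x * f x with hgdef
    have hgmeas : Measurable g := (hSigmeas (σ s)).mul hf
    have e1 : |∫ x, g x ∂(σ s : Measure Y) - ∫ x, g x ∂(σ t₀ : Measure Y)|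
        ≤ B * tvDist (σ s : Measure Y) (σ t₀ : Measure Y) :=
      abs_integral_sub_le_tvDist hgmeas (hmulb s hs)
    have e2 : |∫ x, g x ∂(σ t₀ : Measure Y) - A t₀|
        ≤ (kR * tvDist (σ s : Measure Y) (σ t₀ : Measure Y)) * R := by
      have hsplit : ∫ x, g x ∂(σ t₀ : Measure Y) - A t₀
          = ∫ x, (Sig (σ s) x - Sig (σ t₀) x) * f x ∂(σ t₀ : Measure Y) := by
        rw [hAdef]
        dsimp only
        rw [← integral_sub (g := fun x => Sig (σ t₀) x * f x) (integrable_of_bounded hgmeas (hmulb s hs))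
          (integrable_of_bounded ((hSigmeas (σ t₀)).mul hf) (hmulb t₀ ht₀))]
        congr 1; ext x; rw [hgdef]; ring
      rw [hsplit]
      have hptw : ∀ x, ‖(Sig (σ s) x - Sig (σ t₀) x) * f x‖
          ≤ kR * tvDist (σ s : Measure Y) (σ t₀ : Measure Y) := by
        intro x
        rw [Real.norm_eq_abs, abs_mul]
        calc |Sig (σ s) x - Sig (σ t₀) x| * |f x|
            ≤ (kR * tvDist (σ s : Measure Y) (σ t₀ : Measure Y)) * 1 :=
              mul_le_mul (hLipR (σ s) (σ t₀) (hmass s hs) (hmass t₀ ht₀) x) (hfb x)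
                (abs_nonneg _)
                (mul_nonneg hkR (tvDist_nonneg _ _))
          _ = _ := mul_one _
      have := norm_integral_le_of_norm_le_const (μ := (σ t₀ : Measure Y)) (ae_of_all _ hptw)
      rw [Real.norm_eq_abs] at this
      calc |∫ x, (Sig (σ s) x - Sig (σ t₀) x) * f x ∂(σ t₀ : Measure Y)|
          ≤ (kR * tvDist (σ s : Measure Y) (σ t₀ : Measure Y))
              * (((σ t₀ : Measure Y)) Set.univ).toReal := this
        _ ≤ (kR * tvDist (σ s : Measure Y) (σ t₀ : Measure Y)) * R := by
            apply mul_le_mul_of_nonneg_left _ (mul_nonneg hkR (tvDist_nonneg _ _))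
            rw [mass_toReal]; exact hmass t₀ ht₀
    calc |A s - A t₀| ≤ |A s - ∫ x, g x ∂(σ t₀ : Measure Y)|
          + |∫ x, g x ∂(σ t₀ : Measure Y) - A t₀| := abs_sub_le _ _ _
      _ ≤ B * tvDist (σ s : Measure Y) (σ t₀ : Measure Y)
          + (kR * tvDist (σ s : Measure Y) (σ t₀ : Measure Y)) * R := add_le_add e1 e2
      _ = (B + kR * R) * tvDist (σ s : Measure Y) (σ t₀ : Measure Y) := by ring
  have h1 : Tendsto (fun s => A s - A t₀) (nhdsWithin t₀ (Set.Icc 0 T)) (nhds 0) := by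
    have hev : ∀ᶠ s in nhdsWithin t₀ (Set.Icc 0 T),
        ‖A s - A t₀‖ ≤ (B + kR * R) * tvDist (σ s : Measure Y) (σ t₀ : Measure Y) := by
      filter_upwards [self_mem_nhdsWithin] with s hs
      exact hkey s hs
    have htend : Tendsto (fun s => (B + kR * R) * tvDist (σ s : Measure Y) (σ t₀ : Measure Y))
        (nhdsWithin t₀ (Set.Icc 0 T)) (nhds 0) := by
      have := (hcont t₀ ht₀).const_mul (B + kR * R)
      simpa using this
    exact squeeze_zero_norm' hev htend
  have h2 := h1.add_const (A t₀)
  simp only [sub_add_cancel, zero_add] at h2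
  exact h2

/-- Continuity of `s ↦ tvDist (μ s) (ν s)` for two TV-continuous families. -/
lemma cont_tv {σ τ : ℝ → FiniteMeasure Y} {T : ℝ}
    (hcσ : ∀ t₀ ∈ Set.Icc (0:ℝ) T,
      Tendsto (fun t => tvDist (σ t : Measure Y) (σ t₀ : Measure Y))
        (nhdsWithin t₀ (Set.Icc 0 T)) (nhds 0))
    (hcτ : ∀ t₀ ∈ Set.Icc (0:ℝ) T,
      Tendsto (fun t => tvDist (τ t : Measure Y) (τ t₀ : Measure Y))
        (nhdsWithin t₀ (Set.Icc 0 T)) (nhds 0)) :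
    ContinuousOn (fun s => tvDist (σ s : Measure Y) (τ s : Measure Y)) (Set.Icc 0 T) := by
  intro t₀ ht₀
  have hkey : ∀ s, |tvDist (σ s : Measure Y) (τ s : Measure Y)
      - tvDist (σ t₀ : Measure Y) (τ t₀ : Measure Y)|
      ≤ tvDist (σ s : Measure Y) (σ t₀ : Measure Y)
        + tvDist (τ s : Measure Y) (τ t₀ : Measure Y) := by
    intro s
    rw [abs_le]
    constructor
    · have u1 := tvDist_triangle (α := (σ t₀ : Measure Y)) (β := (σ s : Measure Y))
        ((τ t₀ : Measure Y))
      have u2 := tvDist_triangle (α := (σ s : Measure Y)) (β := (τ s : Measure Y))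
        ((τ t₀ : Measure Y))
      have c1 := tvDist_comm (σ t₀ : Measure Y) (σ s : Measure Y)
      have c2 := tvDist_comm (τ s : Measure Y) (τ t₀ : Measure Y)
      linarith
    · have u1 := tvDist_triangle (α := (σ s : Measure Y)) (β := (σ t₀ : Measure Y))
        ((τ s : Measure Y))
      have u2 := tvDist_triangle (α := (σ t₀ : Measure Y)) (β := (τ t₀ : Measure Y))
        ((τ s : Measure Y))
      have c2 := tvDist_comm (τ t₀ : Measure Y) (τ s : Measure Y)
      linarith
  have h1 : Tendsto (fun s => tvDist (σ s : Measure Y) (τ s : Measure Y)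
      - tvDist (σ t₀ : Measure Y) (τ t₀ : Measure Y))
      (nhdsWithin t₀ (Set.Icc 0 T)) (nhds 0) := by
    apply squeeze_zero_norm' (Eventually.of_forall fun s => hkey s)
    have := (hcσ t₀ ht₀).add (hcτ t₀ ht₀)
    simpa using this
  have h2 := h1.add_const (tvDist (σ t₀ : Measure Y) (τ t₀ : Measure Y))
  simp only [sub_add_cancel, zero_add] at h2
  exact h2

end Cont

section MassBd
set_option linter.unusedSectionVars false
variable {Y : Type*} [MeasurableSpace Y] [TopologicalSpace Y]

lemma sol_mass_bound {Sig : FiniteMeasure Y → Y → ℝ} (hB : ∀ μ', IsBoundedBorel (Sig μ'))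
    {k : ℝ → ℝ} (hk_pos : ∀ r > 0, 0 < k r)
    (hLip : ∀ r > 0, ∀ μ' ν' : FiniteMeasure Y, (μ'.mass : ℝ) ≤ r → (ν'.mass : ℝ) ≤ r →
      ∀ x, |Sig μ' x - Sig ν' x| ≤ k r * tvDist (μ' : Measure Y) (ν' : Measure Y))
    {F : ℝ} (hF0 : 0 ≤ F)
    (hF : ∀ μ' : FiniteMeasure Y, ∫ x, Sig μ' x ∂(μ' : Measure Y) ≤ F * (μ'.mass : ℝ))
    {σ₀ : FiniteMeasure Y} {σ : ℝ → FiniteMeasure Y} {T : ℝ} (hT : 0 ≤ T)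
    (hσ : IsMeasureSolutionOn Sig σ₀ σ T) :
    ∀ t ∈ Set.Icc (0:ℝ) T, ((σ t).mass : ℝ) ≤ (σ₀.mass : ℝ) * Real.exp (F * t) := by
  obtain ⟨h0, hc, hbc, heq⟩ := hσ
  have hmc : ContinuousOn (fun s => ((σ s).mass : ℝ)) (Set.Icc 0 T) := cont_mass hc
  obtain ⟨R0, hR0⟩ := isCompact_Icc.exists_bound_of_continuousOn hmc
  set R : ℝ := max R0 1 with hRdef
  have hR : 0 < R := lt_of_lt_of_le one_pos (le_max_right _ _)
  have hmassR : ∀ s ∈ Set.Icc (0:ℝ) T, ((σ s).mass : ℝ) ≤ R := by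
    intro s hs
    calc ((σ s).mass : ℝ) ≤ |((σ s).mass : ℝ)| := le_abs_self _
      _ ≤ R0 := hR0 s hs
      _ ≤ R := le_max_left _ _
  have hconth : ContinuousOn
      (fun s => ∫ x, Sig (σ s) x * (fun _ => (1:ℝ)) x ∂(σ s : Measure Y)) (Set.Icc 0 T) :=
    cont_pairing (kR := k R) (hk_pos R hR).le hR.le (hB 0).2 (fun μ' => (hB μ').1)
      (hLip R hR) hmassR hc measurable_const (fun x => by norm_num)
  have hconth' : ContinuousOn
      (fun s => ∫ x, Sig (σ s) x ∂(σ s : Measure Y)) (Set.Icc 0 T) := by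
    simpa only [mul_one] using hconth
  have hone : IsBoundedBorel (fun _ : Y => (1:ℝ)) := ⟨measurable_const, 1, fun x => by norm_num⟩
  have key : ∀ t ∈ Set.Icc (0:ℝ) T,
      ((σ t).mass : ℝ) ≤ (σ₀.mass : ℝ) + ∫ s in (0:ℝ)..t, F * ((σ s).mass : ℝ) := by
    intro t ht
    have hm := heq (fun _ => (1:ℝ)) hone t ht
    simp only [integral_const, smul_eq_mul, mul_one, measureReal_def, mass_toReal] at hm
    have hint1 : IntervalIntegrable
        (fun s => ∫ x, Sig (σ s) x ∂(σ s : Measure Y)) volume 0 t := by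
      apply ContinuousOn.intervalIntegrable
      apply hconth'.mono
      rw [uIcc_of_le ht.1]
      exact Icc_subset_Icc_right ht.2
    have hint2 : IntervalIntegrable (fun s => F * ((σ s).mass : ℝ)) volume 0 t := by
      apply ContinuousOn.intervalIntegrable
      apply (continuousOn_const.mul hmc).mono
      rw [uIcc_of_le ht.1]
      exact Icc_subset_Icc_right ht.2
    have hmono := intervalIntegral.integral_mono_on ht.1 hint1 hint2 (fun s hs => by
      have hs' : s ∈ Set.Icc (0:ℝ) T := ⟨hs.1, hs.2.trans ht.2⟩
      exact hF (σ s))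
    rw [hm]
    exact add_le_add_right hmono _
  have := gronwall_integral hT (NNReal.coe_nonneg _) hF0 hmc
    (fun s _ => NNReal.coe_nonneg _) key
  exact this

end MassBd

/-- Stability estimate: two measure solutions with initial data `μ₀, ν₀`
satisfy `‖μ_t − ν_t‖_TV ≤ e^{L(T)t}‖μ₀ − ν₀‖_TV`, where
`L(T) = 2·sup_{t∈[0,T]}((‖μ₀‖+‖ν₀‖)e^{Ft} k((‖μ₀‖+‖ν₀‖)e^{Ft}) + ‖Σ[0]‖_∞)`. -/
theorem selection_stability {d : ℕ} (X : Set (EuclideanSpace ℝ (Fin d)))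
    (hX : IsCompact X)
    (Sig : FiniteMeasure X → X → ℝ) (hB : ∀ μ, IsBoundedBorel (Sig μ))
    (k : ℝ → ℝ) (hk_pos : ∀ r > 0, 0 < k r)
    (hk_loc : ∀ R > 0, ∃ K, ∀ r ∈ Set.Ioc (0:ℝ) R, k r ≤ K)
    (hLip : ∀ r > 0, ∀ μ ν : FiniteMeasure X, (μ.mass : ℝ) ≤ r → (ν.mass : ℝ) ≤ r →
      ∀ x, |Sig μ x - Sig ν x| ≤ k r * tvDist (μ : Measure X) (ν : Measure X))
    (F : ℝ) (hFpos : 0 < F) (hF : HypF Sig F)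
    (μ₀ ν₀ : FiniteMeasure X) (T : ℝ) (hT : 0 < T)
    (μ ν : ℝ → FiniteMeasure X)
    (hμ : IsMeasureSolutionOn Sig μ₀ μ T) (hν : IsMeasureSolutionOn Sig ν₀ ν T) :
    ∀ t ∈ Set.Icc (0:ℝ) T,
      tvDist (μ t : Measure X) (ν t : Measure X) ≤
        Real.exp
          ((2 * ⨆ s : Set.Icc (0:ℝ) T,
              (((μ₀.mass : ℝ) + (ν₀.mass : ℝ)) * Real.exp (F * (s : ℝ)) *
                  k (((μ₀.mass : ℝ) + (ν₀.mass : ℝ)) * Real.exp (F * (s : ℝ)))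
                + ⨆ x : X, |Sig 0 x|)) * t)
          * tvDist (μ₀ : Measure X) (ν₀ : Measure X) := by
  have hF' : ∀ μ' : FiniteMeasure X, ∫ x, Sig μ' x ∂(μ' : Measure X) ≤ F * (μ'.mass : ℝ) :=
    fun μ' => hF μ'
  have hmassμ := sol_mass_bound hB hk_pos hLip hFpos.le hF' hT.le hμ
  have hmassν := sol_mass_bound hB hk_pos hLip hFpos.le hF' hT.le hν
  set m : ℝ := (μ₀.mass : ℝ) + (ν₀.mass : ℝ) with hmdef
  set Csig : ℝ := ⨆ x : X, |Sig 0 x| with hCsigdef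
  set S : ℝ := ⨆ s : Set.Icc (0:ℝ) T,
      (m * Real.exp (F * (s : ℝ)) * k (m * Real.exp (F * (s : ℝ))) + Csig) with hSdef
  intro t ht
  have hm0 : 0 ≤ m := add_nonneg (NNReal.coe_nonneg _) (NNReal.coe_nonneg _)
  rcases eq_or_lt_of_le hm0 with hmz | hm
  · -- degenerate case: both initial data vanish
    have hμ0 : (μ₀.mass : ℝ) = 0 := by
      have h1 := NNReal.coe_nonneg μ₀.mass
      have h2 := NNReal.coe_nonneg ν₀.mass
      rw [hmdef] at hmz; linarith
    have hν0 : (ν₀.mass : ℝ) = 0 := by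
      have h1 := NNReal.coe_nonneg μ₀.mass
      rw [hmdef] at hmz; linarith
    have hLHS : tvDist (μ t : Measure X) (ν t : Measure X) ≤ 0 := by
      have htr := tvDist_triangle (α := (μ t : Measure X)) (β := (0 : Measure X))
        ((ν t : Measure X))
      have e1 : tvDist (μ t : Measure X) (0 : Measure X) = ((μ t).mass : ℝ) := by
        rw [tvDist_zero_right, mass_toReal]
      have e2 : tvDist (0 : Measure X) (ν t : Measure X) = ((ν t).mass : ℝ) := by
        rw [tvDist_comm, tvDist_zero_right, mass_toReal]
      have b1 := hmassμ t ht
      have b2 := hmassν t ht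
      rw [hμ0, zero_mul] at b1
      rw [hν0, zero_mul] at b2
      rw [e1, e2] at htr
      linarith
    have hRHS : 0 ≤ Real.exp ((2 * S) * t) * tvDist (μ₀ : Measure X) (ν₀ : Measure X) :=
      mul_nonneg (Real.exp_pos _).le (tvDist_nonneg _ _)
    linarith
  · -- main case m > 0
    have hne : Nonempty X := by
      by_contra h
      have hz : ∀ ρ : FiniteMeasure X, (ρ.mass : ℝ) = 0 := by
        intro ρ
        rw [← mass_toReal, Set.univ_eq_empty_iff.mpr (not_nonempty_iff.mp h)]
        simp
      rw [hmdef, hz μ₀, hz ν₀] at hm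
      linarith
    obtain ⟨C0, hC0⟩ := (hB 0).2
    have hbddC : BddAbove (Set.range fun x : X => |Sig 0 x|) :=
      ⟨C0, by rintro _ ⟨x, rfl⟩; exact hC0 x⟩
    have hCsig_ge : ∀ x : X, |Sig 0 x| ≤ Csig := fun x => le_ciSup hbddC x
    have hCsig0 : 0 ≤ Csig := le_trans (abs_nonneg _) (hCsig_ge hne.some)
    set R : ℝ := m * Real.exp (F * T) with hRdef
    have hR : 0 < R := mul_pos hm (Real.exp_pos _)
    obtain ⟨K, hK⟩ := hk_loc R hR
    have hK0 : 0 ≤ K := le_trans (hk_pos R hR).le (hK R ⟨hR, le_rfl⟩)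
    have hrs_mem : ∀ s ∈ Set.Icc (0:ℝ) T, m * Real.exp (F * s) ∈ Set.Ioc (0:ℝ) R := by
      intro s hs
      refine ⟨mul_pos hm (Real.exp_pos _), ?_⟩
      rw [hRdef]
      apply mul_le_mul_of_nonneg_left _ hm0
      exact Real.exp_le_exp.mpr (mul_le_mul_of_nonneg_left hs.2 hFpos.le)
    have hbddS : BddAbove (Set.range fun s : Set.Icc (0:ℝ) T =>
        m * Real.exp (F * (s : ℝ)) * k (m * Real.exp (F * (s : ℝ))) + Csig) := by
      refine ⟨R * K + Csig, ?_⟩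
      rintro _ ⟨s, rfl⟩
      dsimp only
      have hmem := hrs_mem (s : ℝ) s.2
      have : m * Real.exp (F * (s : ℝ)) * k (m * Real.exp (F * (s : ℝ))) ≤ R * K :=
        mul_le_mul hmem.2 (hK _ hmem) (hk_pos _ hmem.1).le hR.le
      linarith
    have hS_ge : ∀ s ∈ Set.Icc (0:ℝ) T,
        m * Real.exp (F * s) * k (m * Real.exp (F * s)) + Csig ≤ S := by
      intro s hs
      exact le_ciSup hbddS (⟨s, hs⟩ : Set.Icc (0:ℝ) T)
    have hS0 : 0 ≤ S := by
      refine le_trans ?_ (hS_ge 0 ⟨le_rfl, hT.le⟩)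
      have := mul_pos (mul_pos hm (Real.exp_pos (F * 0))) (hk_pos _ (hrs_mem 0 ⟨le_rfl, hT.le⟩).1)
      linarith
    set L : ℝ := 2 * S with hLdef
    have hL0 : 0 ≤ L := by rw [hLdef]; linarith
    have hSL : S ≤ L := by rw [hLdef]; linarith
    -- crude mass bounds by R
    have hmassμR : ∀ s ∈ Set.Icc (0:ℝ) T, ((μ s).mass : ℝ) ≤ R := by
      intro s hs
      calc ((μ s).mass : ℝ) ≤ (μ₀.mass : ℝ) * Real.exp (F * s) := hmassμ s hs
        _ ≤ m * Real.exp (F * s) := by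
            apply mul_le_mul_of_nonneg_right _ (Real.exp_pos _).le
            rw [hmdef]; linarith [NNReal.coe_nonneg ν₀.mass]
        _ ≤ R := (hrs_mem s hs).2
    have hmassνR : ∀ s ∈ Set.Icc (0:ℝ) T, ((ν s).mass : ℝ) ≤ R := by
      intro s hs
      calc ((ν s).mass : ℝ) ≤ (ν₀.mass : ℝ) * Real.exp (F * s) := hmassν s hs
        _ ≤ m * Real.exp (F * s) := by
            apply mul_le_mul_of_nonneg_right _ (Real.exp_pos _).le
            rw [hmdef]; linarith [NNReal.coe_nonneg μ₀.mass]
        _ ≤ R := (hrs_mem s hs).2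
    -- continuity of s ↦ tvDist (μ s) (ν s)
    have hφc : ContinuousOn (fun s => tvDist (μ s : Measure X) (ν s : Measure X))
        (Set.Icc 0 T) := cont_tv hμ.2.1 hν.2.1
    have hφ0 : ∀ s ∈ Set.Icc (0:ℝ) T, 0 ≤ tvDist (μ s : Measure X) (ν s : Measure X) :=
      fun s _ => tvDist_nonneg _ _
    have hc0 : 0 ≤ tvDist (μ₀ : Measure X) (ν₀ : Measure X) := tvDist_nonneg _ _
    -- the key integral inequality
    have key : ∀ u ∈ Set.Icc (0:ℝ) T,
        tvDist (μ u : Measure X) (ν u : Measure X)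
          ≤ tvDist (μ₀ : Measure X) (ν₀ : Measure X)
            + ∫ s in (0:ℝ)..u, L * tvDist (μ s : Measure X) (ν s : Measure X) := by
      intro u hu
      obtain ⟨f, hfmeas, hfb, hrep⟩ :=
        exists_rep_tvDist (α := (μ u : Measure X)) (β := (ν u : Measure X))
      have hfBB : IsBoundedBorel f := ⟨hfmeas, 1, hfb⟩
      have hμeq := hμ.2.2.2 f hfBB u hu
      have hνeq := hν.2.2.2 f hfBB u hu
      have hcμ : ContinuousOn
          (fun s => ∫ x, Sig (μ s) x * f x ∂(μ s : Measure X)) (Set.Icc 0 T) :=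
        cont_pairing (hk_pos R hR).le hR.le (hB 0).2 (fun μ' => (hB μ').1)
          (hLip R hR) hmassμR hμ.2.1 hfmeas hfb
      have hcν : ContinuousOn
          (fun s => ∫ x, Sig (ν s) x * f x ∂(ν s : Measure X)) (Set.Icc 0 T) :=
        cont_pairing (hk_pos R hR).le hR.le (hB 0).2 (fun μ' => (hB μ').1)
          (hLip R hR) hmassνR hν.2.1 hfmeas hfb
      have hintμ : IntervalIntegrable
          (fun s => ∫ x, Sig (μ s) x * f x ∂(μ s : Measure X)) volume 0 u := by
        apply ContinuousOn.intervalIntegrable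
        apply hcμ.mono
        rw [uIcc_of_le hu.1]
        exact Icc_subset_Icc_right hu.2
      have hintν : IntervalIntegrable
          (fun s => ∫ x, Sig (ν s) x * f x ∂(ν s : Measure X)) volume 0 u := by
        apply ContinuousOn.intervalIntegrable
        apply hcν.mono
        rw [uIcc_of_le hu.1]
        exact Icc_subset_Icc_right hu.2
      have hintL : IntervalIntegrable
          (fun s => L * tvDist (μ s : Measure X) (ν s : Measure X)) volume 0 u := by
        apply ContinuousOn.intervalIntegrable
        apply (continuousOn_const.mul hφc).mono
        rw [uIcc_of_le hu.1]
        exact Icc_subset_Icc_right hu.2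
      -- pointwise bound on the difference of pairings
      have hpt : ∀ s ∈ Set.Icc (0:ℝ) u,
          (∫ x, Sig (μ s) x * f x ∂(μ s : Measure X))
            - (∫ x, Sig (ν s) x * f x ∂(ν s : Measure X))
          ≤ L * tvDist (μ s : Measure X) (ν s : Measure X) := by
        intro s hs
        have hs' : s ∈ Set.Icc (0:ℝ) T := ⟨hs.1, hs.2.trans hu.2⟩
        set rs : ℝ := m * Real.exp (F * s) with hrsdef
        have hrs := hrs_mem s hs'
        have hkrs : 0 < k rs := hk_pos _ hrs.1
        have hmμ : ((μ s).mass : ℝ) ≤ rs := by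
          calc ((μ s).mass : ℝ) ≤ (μ₀.mass : ℝ) * Real.exp (F * s) := hmassμ s hs'
            _ ≤ rs := by
                rw [hrsdef]
                apply mul_le_mul_of_nonneg_right _ (Real.exp_pos _).le
                rw [hmdef]; linarith [NNReal.coe_nonneg ν₀.mass]
        have hmν : ((ν s).mass : ℝ) ≤ rs := by
          calc ((ν s).mass : ℝ) ≤ (ν₀.mass : ℝ) * Real.exp (F * s) := hmassν s hs'
            _ ≤ rs := by
                rw [hrsdef]
                apply mul_le_mul_of_nonneg_right _ (Real.exp_pos _).le
                rw [hmdef]; linarith [NNReal.coe_nonneg μ₀.mass]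
        have hzm : (((0 : FiniteMeasure X)).mass : ℝ) ≤ rs := by
          simp [FiniteMeasure.zero_mass, hrs.1.le]
          exact hrs.1.le
        -- bound on ‖Sig (μ s)‖
        set Bs : ℝ := Csig + k rs * ((μ s).mass : ℝ) with hBsdef
        have hSb : ∀ x, |Sig (μ s) x| ≤ Bs := by
          intro x
          have h1 := hLip rs hrs.1 (μ s) 0 hmμ hzm x
          rw [tvDist_fm_zero] at h1
          have h2 : |Sig (μ s) x| ≤ |Sig (μ s) x - Sig 0 x| + |Sig 0 x| := by
            have := abs_sub_abs_le_abs_sub (Sig (μ s) x) (Sig 0 x)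
            linarith [abs_nonneg (Sig 0 x)]
          have h3 := hCsig_ge x
          rw [hBsdef]; linarith
        have hBs0 : 0 ≤ Bs := le_trans (abs_nonneg _) (hSb hne.some)
        have hgb : ∀ x, |Sig (μ s) x * f x| ≤ Bs := by
          intro x
          rw [abs_mul]
          calc |Sig (μ s) x| * |f x| ≤ Bs * 1 :=
                mul_le_mul (hSb x) (hfb x) (abs_nonneg _) hBs0
            _ = Bs := mul_one _
        have hgmeas : Measurable fun x => Sig (μ s) x * f x := ((hB (μ s)).1).mul hfmeas
        set φs : ℝ := tvDist (μ s : Measure X) (ν s : Measure X) with hφsdef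
        have hφs0 : 0 ≤ φs := tvDist_nonneg _ _
        have e1 : (∫ x, Sig (μ s) x * f x ∂(μ s : Measure X))
            - (∫ x, Sig (μ s) x * f x ∂(ν s : Measure X)) ≤ Bs * φs :=
          integral_sub_le_tvDist hgmeas hgb
        have hsplit : (∫ x, Sig (μ s) x * f x ∂(ν s : Measure X))
            - (∫ x, Sig (ν s) x * f x ∂(ν s : Measure X))
            = ∫ x, (Sig (μ s) x - Sig (ν s) x) * f x ∂(ν s : Measure X) := by
          rw [← integral_sub (g := fun x => Sig (ν s) x * f x) (integrable_of_bounded hgmeas hgb)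
            (integrable_of_bounded (((hB (ν s)).1).mul hfmeas) ?hb)]
          case hb =>
            intro x
            rw [abs_mul]
            have h1 := hLip rs hrs.1 (ν s) 0 hmν hzm x
            rw [tvDist_fm_zero] at h1
            have h2 : |Sig (ν s) x| ≤ |Sig (ν s) x - Sig 0 x| + |Sig 0 x| := by
              have := abs_sub_abs_le_abs_sub (Sig (ν s) x) (Sig 0 x)
              linarith [abs_nonneg (Sig 0 x)]
            have h3 := hCsig_ge x
            calc |Sig (ν s) x| * |f x| ≤ (Csig + k rs * ((ν s).mass : ℝ)) * 1 := by
                  apply mul_le_mul _ (hfb x) (abs_nonneg _)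
                  · linarith [mul_nonneg hkrs.le (NNReal.coe_nonneg (ν s).mass)]
                  · linarith
              _ = Csig + k rs * ((ν s).mass : ℝ) := mul_one _
          congr 1; ext x; ring
        have e2 : (∫ x, Sig (μ s) x * f x ∂(ν s : Measure X))
            - (∫ x, Sig (ν s) x * f x ∂(ν s : Measure X))
            ≤ (k rs * φs) * ((ν s).mass : ℝ) := by
          rw [hsplit]
          have hptw : ∀ x, ‖(Sig (μ s) x - Sig (ν s) x) * f x‖ ≤ k rs * φs := by
            intro x
            rw [Real.norm_eq_abs, abs_mul]
            calc |Sig (μ s) x - Sig (ν s) x| * |f x| ≤ (k rs * φs) * 1 :=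
                  mul_le_mul (hLip rs hrs.1 (μ s) (ν s) hmμ hmν x) (hfb x) (abs_nonneg _)
                    (mul_nonneg hkrs.le hφs0)
              _ = k rs * φs := mul_one _
          have hni := norm_integral_le_of_norm_le_const (μ := (ν s : Measure X))
            (ae_of_all _ hptw)
          rw [Real.norm_eq_abs] at hni
          calc ∫ x, (Sig (μ s) x - Sig (ν s) x) * f x ∂(ν s : Measure X)
              ≤ |∫ x, (Sig (μ s) x - Sig (ν s) x) * f x ∂(ν s : Measure X)| := le_abs_self _
            _ ≤ (k rs * φs) * (((ν s : Measure X)) Set.univ).toReal := hni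
            _ = (k rs * φs) * ((ν s).mass : ℝ) := by rw [mass_toReal]
        have hcomb : (∫ x, Sig (μ s) x * f x ∂(μ s : Measure X))
            - (∫ x, Sig (ν s) x * f x ∂(ν s : Measure X))
            ≤ (Csig + k rs * (((μ s).mass : ℝ) + ((ν s).mass : ℝ))) * φs := by
          have : Bs * φs + (k rs * φs) * ((ν s).mass : ℝ)
              = (Csig + k rs * (((μ s).mass : ℝ) + ((ν s).mass : ℝ))) * φs := by
            rw [hBsdef]; ring
          linarith [e1, e2]
        have hterm : Csig + k rs * (((μ s).mass : ℝ) + ((ν s).mass : ℝ))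
            ≤ rs * k rs + Csig := by
          have hsum : ((μ s).mass : ℝ) + ((ν s).mass : ℝ) ≤ rs := by
            have h1 := hmassμ s hs'
            have h2 := hmassν s hs'
            rw [hrsdef, hmdef]
            have : ((μ₀.mass : ℝ) + (ν₀.mass : ℝ)) * Real.exp (F * s)
                = (μ₀.mass : ℝ) * Real.exp (F * s) + (ν₀.mass : ℝ) * Real.exp (F * s) := by ring
            rw [this]
            exact add_le_add h1 h2
          nlinarith [hkrs.le]
        have hterm2 : rs * k rs + Csig ≤ S := by
          have := hS_ge s hs'
          rw [hrsdef]; linarith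
        calc (∫ x, Sig (μ s) x * f x ∂(μ s : Measure X))
            - (∫ x, Sig (ν s) x * f x ∂(ν s : Measure X))
            ≤ (Csig + k rs * (((μ s).mass : ℝ) + ((ν s).mass : ℝ))) * φs := hcomb
          _ ≤ L * φs := by
              apply mul_le_mul_of_nonneg_right _ hφs0
              linarith [hterm, hterm2]
      -- assemble
      have hsub : tvDist (μ u : Measure X) (ν u : Measure X)
          = ((∫ x, f x ∂(μ₀ : Measure X)) - (∫ x, f x ∂(ν₀ : Measure X)))
            + ∫ s in (0:ℝ)..u,
                ((∫ x, Sig (μ s) x * f x ∂(μ s : Measure X))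
                  - (∫ x, Sig (ν s) x * f x ∂(ν s : Measure X))) := by
        rw [hrep, hμeq, hνeq, intervalIntegral.integral_sub hintμ hintν]
        ring
      have hb1 : (∫ x, f x ∂(μ₀ : Measure X)) - (∫ x, f x ∂(ν₀ : Measure X))
          ≤ tvDist (μ₀ : Measure X) (ν₀ : Measure X) := by
        have := integral_sub_le_tvDist (α := (μ₀ : Measure X)) (β := (ν₀ : Measure X))
          hfmeas hfb
        linarith [this]
      have hb2 : (∫ s in (0:ℝ)..u,
            ((∫ x, Sig (μ s) x * f x ∂(μ s : Measure X))
              - (∫ x, Sig (ν s) x * f x ∂(ν s : Measure X))))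
          ≤ ∫ s in (0:ℝ)..u, L * tvDist (μ s : Measure X) (ν s : Measure X) :=
        intervalIntegral.integral_mono_on hu.1 (hintμ.sub hintν) hintL hpt
      rw [hsub]
      linarith
    have hfinal := gronwall_integral hT.le hc0 hL0 hφc hφ0 key t ht
    calc tvDist (μ t : Measure X) (ν t : Measure X)
        ≤ tvDist (μ₀ : Measure X) (ν₀ : Measure X) * Real.exp (L * t) := hfinal
      _ = Real.exp ((2 * S) * t) * tvDist (μ₀ : Measure X) (ν₀ : Measure X) := by
          rw [hLdef, mul_comm]
end

section
/- Under hypotheses (Lip) and (F), the measure solution (μ_t)_{t≥0} of the pure selection equation with nonnegative initial datum μ₀ satisfies supp μ_t ⊆ supp μ₀ for every t ≥ 0. -/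
open MeasureTheory Filter Set

/-- Global measure solution of the pure selection equation on `[0,∞)` with initial datum `μ₀`:
a family of finite measures such that `t ↦ ⟨μ_t, f⟩` is continuous for every bounded
continuous `f`, and for every bounded Borel `f` and `t ≥ 0`,
`⟨μ_t, f⟩ = ⟨μ₀, f⟩ + ∫_0^t ⟨μ_s, Σ[μ_s] f⟩ ds`. -/
def IsMeasureSolution {Y : Type*} [MeasurableSpace Y] [TopologicalSpace Y]
    (Sig : FiniteMeasure Y → Y → ℝ) (μ₀ : FiniteMeasure Y)
    (μ : ℝ → FiniteMeasure Y) : Prop :=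
  μ 0 = μ₀ ∧
  (∀ f : BoundedContinuousFunction Y ℝ,
    ContinuousOn (fun t => ∫ x, f x ∂(μ t : Measure Y)) (Set.Ici 0)) ∧
  (∀ f : Y → ℝ, IsBoundedBorel f → ∀ t, 0 ≤ t →
    ∫ x, f x ∂(μ t : Measure Y)
      = ∫ x, f x ∂(μ₀ : Measure Y)
        + ∫ s in (0:ℝ)..t, ∫ x, Sig (μ s) x * f x ∂(μ s : Measure Y))

/-- The support of a measure: points all of whose neighbourhoods have positive measure. -/

private lemma gronwall_zero {g m : ℝ → ℝ} {t K : ℝ} (ht : 0 ≤ t) (hK : 0 ≤ K)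
    (hm_nonneg : ∀ s ∈ Icc (0:ℝ) t, 0 ≤ m s)
    (hint : ∀ s ∈ Icc (0:ℝ) t, m s = ∫ u in (0:ℝ)..s, g u)
    (hgi : IntervalIntegrable g volume 0 t)
    (hg : ∀ u ∈ Icc (0:ℝ) t, g u ≤ K * m u) : m t = 0 := by
  have hIoU : uIcc (0:ℝ) t = Icc 0 t := uIcc_of_le ht
  have hgI : IntegrableOn g (Icc 0 t) volume :=
    (intervalIntegrable_iff_integrableOn_Icc_of_le ht).1 hgi
  have hm_cont : ContinuousOn m (Icc 0 t) := by
    have := intervalIntegral.continuousOn_primitive_interval (a := 0) (b := t)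
      (μ := volume) (f := g) (hIoU ▸ hgI)
    rw [hIoU] at this
    exact this.congr hint
  obtain ⟨M, hM⟩ := isCompact_Icc.exists_bound_of_continuousOn hm_cont
  have hM0 : 0 ≤ M := le_trans (norm_nonneg _) (hM 0 ⟨le_refl _, ht⟩)
  have hmM : ∀ s ∈ Icc (0:ℝ) t, m s ≤ M := fun s hs =>
    (le_abs_self _).trans (hM s hs)
  have key : ∀ n : ℕ, ∀ s ∈ Icc (0:ℝ) t, m s ≤ M * (K*s)^n / n.factorial := by
    intro n
    induction n with
    | zero => intro s hs; simpa using hmM s hs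
    | succ n ih =>
      intro s hs
      have hs0 : 0 ≤ s := hs.1
      have hsub : ∀ u ∈ Icc (0:ℝ) s, u ∈ Icc (0:ℝ) t :=
        fun u hu => ⟨hu.1, hu.2.trans hs.2⟩
      have hgis : IntervalIntegrable g volume 0 s :=
        hgi.mono_set (by rw [hIoU, uIcc_of_le hs0]; exact Icc_subset_Icc le_rfl hs.2)
      have hRHSint : IntervalIntegrable (fun u => K * (M * (K*u)^n / n.factorial)) volume 0 s := by
        apply Continuous.intervalIntegrable; continuity
      have hmono : ∫ u in (0:ℝ)..s, g u ≤ ∫ u in (0:ℝ)..s, K * (M * (K*u)^n / n.factorial) := by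
        apply intervalIntegral.integral_mono_on hs0 hgis hRHSint
        intro u hu
        exact (hg u (hsub u hu)).trans (mul_le_mul_of_nonneg_left (ih u (hsub u hu)) hK)
      have hcalc : ∫ u in (0:ℝ)..s, K * (M * (K*u)^n / n.factorial)
          = M * (K*s)^(n+1) / (n+1).factorial := by
        have : ∀ u : ℝ, K * (M * (K*u)^n / n.factorial)
            = (K * M * K^n / n.factorial) * u^n := by
          intro u; rw [mul_pow]; ring
        simp_rw [this]
        rw [intervalIntegral.integral_const_mul, integral_pow]
        rw [Nat.factorial_succ, mul_pow]
        push_cast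
        field_simp
        ring
      rw [hint s hs]
      calc ∫ u in (0:ℝ)..s, g u ≤ _ := hmono
        _ = _ := hcalc
  have hle : ∀ n : ℕ, m t ≤ M * ((K*t)^n / n.factorial) := by
    intro n
    have := key n t ⟨ht, le_rfl⟩
    linarith [this, mul_div_assoc M ((K*t)^n) (n.factorial : ℝ)]
  have htend : Tendsto (fun n : ℕ => M * ((K*t)^n / n.factorial)) atTop (nhds 0) := by
    have := (FloorSemiring.tendsto_pow_div_factorial_atTop (K*t)).const_mul M
    simpa using this
  have : m t ≤ 0 := ge_of_tendsto htend (Eventually.of_forall hle)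
  exact le_antisymm this (hm_nonneg t ⟨ht, le_rfl⟩)

private lemma mass_toReal' {Y : Type*} [MeasurableSpace Y] (ν : FiniteMeasure Y) :
    ((ν.mass : ℝ)) = ((ν : Measure Y) univ).toReal := by
  rw [← MeasureTheory.FiniteMeasure.ennreal_mass, ENNReal.coe_toReal]

private lemma tv_le' {Y : Type*} [MeasurableSpace Y] (ν₁ ν₂ : FiniteMeasure Y) :
    tvDist (ν₁ : Measure Y) (ν₂ : Measure Y)
      ≤ ((ν₁ : Measure Y) univ).toReal + ((ν₂ : Measure Y) univ).toReal := by
  unfold tvDist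
  have h1 : ((ν₁ : Measure Y) - ν₂) univ ≤ (ν₁ : Measure Y) univ := Measure.sub_le univ
  have h2 : ((ν₂ : Measure Y) - ν₁) univ ≤ (ν₂ : Measure Y) univ := Measure.sub_le univ
  have hμ : (ν₁ : Measure Y) univ ≠ ⊤ := measure_ne_top _ _
  have hν : (ν₂ : Measure Y) univ ≠ ⊤ := measure_ne_top _ _
  calc (((ν₁ : Measure Y) - ν₂) univ + ((ν₂ : Measure Y) - ν₁) univ).toReal
      ≤ ((ν₁ : Measure Y) univ + (ν₂ : Measure Y) univ).toReal := by
        apply ENNReal.toReal_mono (by simp [hμ, hν]) (add_le_add h1 h2)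
    _ = _ := ENNReal.toReal_add hμ hν


def msupport {Y : Type*} [TopologicalSpace Y] [MeasurableSpace Y] (μ : Measure Y) : Set Y :=
  {x | ∀ U ∈ nhds x, μ U ≠ 0}

/-- Under (Lip) and (F), the measure solution with nonnegative initial
datum `μ₀` satisfies `supp μ_t ⊆ supp μ₀` for every `t ≥ 0`. -/
theorem selection_support_inclusion {d : ℕ} (X : Set (EuclideanSpace ℝ (Fin d)))
    (hX : IsCompact X)
    (Sig : FiniteMeasure X → X → ℝ) (hB : ∀ μ, IsBoundedBorel (Sig μ))
    (hLip : HypLip Sig) (hF : ∃ F > 0, HypF Sig F)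
    (μ₀ : FiniteMeasure X) (μ : ℝ → FiniteMeasure X)
    (hμ : IsMeasureSolution Sig μ₀ μ) :
    ∀ t, 0 ≤ t → msupport (μ t : Measure X) ⊆ msupport (μ₀ : Measure X) := by
  obtain ⟨k, hkpos, -, hk⟩ := hLip
  obtain ⟨heq0, hcont, heqn⟩ := hμ
  intro t ht x hx U hU h0
  -- it suffices to show (μ t) (interior U) = 0
  set A := interior U with hAdef
  have hA : MeasurableSet A := isOpen_interior.measurableSet
  have hA0 : (μ₀ : Measure X) A = 0 := measure_mono_null interior_subset h0
  refine hx A (interior_mem_nhds.2 hU) ?_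
  -- test function: indicator of A
  set f : X → ℝ := A.indicator (fun _ => (1:ℝ)) with hfdef
  have hf : IsBoundedBorel f := by
    refine ⟨measurable_const.indicator hA, 1, fun y => ?_⟩
    by_cases hy : y ∈ A <;> simp [hfdef, Set.indicator_apply, hy]
  have hf01 : ∀ y, 0 ≤ f y ∧ f y ≤ 1 := by
    intro y; by_cases hy : y ∈ A <;> simp [hfdef, Set.indicator_apply, hy]
  set m : ℝ → ℝ := fun s => ∫ y, f y ∂((μ s : Measure X)) with hmdef
  set g : ℝ → ℝ := fun u => ∫ y, Sig (μ u) y * f y ∂((μ u : Measure X)) with hgdef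
  have hmA : ∀ s, m s = ((μ s : Measure X) A).toReal := by
    intro s; rw [hmdef]; simp only [hfdef]
    rw [integral_indicator_const (1:ℝ) hA]; simp only [smul_eq_mul, mul_one, Measure.real]
  have hm_nonneg : ∀ s, 0 ≤ m s :=
    fun s => integral_nonneg (fun y => (hf01 y).1)
  have heq : ∀ s, 0 ≤ s → m s = ∫ u in (0:ℝ)..s, g u := by
    intro s hs
    have h := heqn f hf s hs
    have h0' : ∫ y, f y ∂(μ₀ : Measure X) = 0 := by
      simp only [hfdef]; rw [integral_indicator_const (1:ℝ) hA, Measure.real, hA0]; simp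
    rw [hmdef]
    simp only
    rw [h, h0', zero_add]
  -- uniform bound on masses over [0,t]
  have hmassc : ContinuousOn (fun s => ((μ s : Measure X) univ).toReal) (Ici (0:ℝ)) := by
    have := hcont (BoundedContinuousFunction.const X (1:ℝ))
    simp at this
    refine this.congr (fun s _ => ?_)
    exact (mass_toReal' (μ s)).symm
  obtain ⟨R, hR⟩ := isCompact_Icc.exists_bound_of_continuousOn
    (hmassc.mono (Icc_subset_Ici_self : Icc (0:ℝ) t ⊆ Ici 0))
  have hRb : ∀ s ∈ Icc (0:ℝ) t, ((μ s : Measure X) univ).toReal ≤ R :=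
    fun s hs => (le_abs_self _).trans (hR s hs)
  have hR0 : 0 ≤ R := le_trans (abs_nonneg _) (hR 0 ⟨le_rfl, ht⟩)
  set r := R + 1 with hrdef
  have hrpos : 0 < r := by linarith
  obtain ⟨C₀, hC₀⟩ := (hB μ₀).2
  set K := k r * (2*R) + |C₀| with hKdef
  have hK : 0 ≤ K :=
    add_nonneg (mul_nonneg (hkpos r hrpos).le (by linarith)) (abs_nonneg _)
  have hmass : ∀ s ∈ Icc (0:ℝ) t, ((μ s).mass : ℝ) ≤ r := by
    intro s hs; rw [mass_toReal']; linarith [hRb s hs]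
  have hmass0 : ((μ₀).mass : ℝ) ≤ r := by
    have := hmass 0 ⟨le_rfl, ht⟩; rwa [heq0] at this
  have hRb0 : ((μ₀ : Measure X) univ).toReal ≤ R := by
    have := hRb 0 ⟨le_rfl, ht⟩; rwa [heq0] at this
  have htv : ∀ s ∈ Icc (0:ℝ) t,
      tvDist ((μ s : Measure X)) ((μ₀ : Measure X)) ≤ 2*R := by
    intro s hs
    have := tv_le' (μ s) μ₀
    have h1 := hRb s hs
    linarith
  have hSig : ∀ s ∈ Icc (0:ℝ) t, ∀ y, |Sig (μ s) y| ≤ K := by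
    intro s hs y
    have hd := hk r hrpos (μ s) μ₀ (hmass s hs) hmass0 y
    calc |Sig (μ s) y| = |(Sig (μ s) y - Sig μ₀ y) + Sig μ₀ y| := by ring_nf
      _ ≤ |Sig (μ s) y - Sig μ₀ y| + |Sig μ₀ y| := abs_add_le _ _
      _ ≤ k r * tvDist ((μ s : Measure X)) ((μ₀ : Measure X)) + |C₀| :=
          add_le_add hd ((hC₀ y).trans (le_abs_self C₀))
      _ ≤ K := by
          rw [hKdef]
          exact add_le_add_left
            (mul_le_mul_of_nonneg_left (htv s hs) (hkpos r hrpos).le) _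
  -- the key differential inequality
  have hfint : ∀ s : ℝ, Integrable f ((μ s : Measure X)) :=
    fun s => (integrable_const (1:ℝ)).indicator hA
  have hgb : ∀ u ∈ Icc (0:ℝ) t, g u ≤ K * m u := by
    intro u hu
    have hKf : Integrable (fun y => K * f y) ((μ u : Measure X)) :=
      (hfint u).const_mul K
    have hmeas : Measurable (fun y => Sig (μ u) y * f y) := (hB (μ u)).1.mul hf.1
    have hint1 : Integrable (fun y => Sig (μ u) y * f y) ((μ u : Measure X)) := by
      apply Integrable.mono' hKf hmeas.aestronglyMeasurable
      filter_upwards with y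
      rw [Real.norm_eq_abs, abs_mul, abs_of_nonneg (hf01 y).1]
      exact mul_le_mul_of_nonneg_right (hSig u hu y) (hf01 y).1
    have : g u ≤ ∫ y, K * f y ∂((μ u : Measure X)) := by
      rw [hgdef]
      refine integral_mono hint1 hKf (fun y => ?_)
      exact mul_le_mul_of_nonneg_right
        ((le_abs_self _).trans (hSig u hu y)) (hf01 y).1
    rwa [MeasureTheory.integral_const_mul] at this
  -- conclude via Gronwall
  have hmt : m t = 0 := by
    by_cases hgi : IntervalIntegrable g volume 0 t
    · exact gronwall_zero ht hK (fun s _ => hm_nonneg s) (fun s hs => heq s hs.1) hgi hgb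
    · rw [heq t ht, intervalIntegral.integral_undef hgi]
  rw [hmA t] at hmt
  exact ((ENNReal.toReal_eq_zero_iff _).1 hmt).resolve_right (measure_ne_top _ _)
end

section
/- Under hypothesis (F), any measure solution (μ_t)_{t≥0} of the pure selection equation consisting of nonnegative measures with nonnegative initial datum μ₀ satisfies μ_t(X) ≤ μ₀(X) e^{Ft} for every t ≥ 0; in particular the solution does not blow up in finite time. -/
open MeasureTheory Filter Set

/-- Under (F), any measure solution consisting of nonnegative measures
satisfies `μ_t(X) ≤ μ₀(X) e^{Ft}` for every `t ≥ 0`: no blow-up in finite time. -/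
theorem selection_mass_growth {d : ℕ} (X : Set (EuclideanSpace ℝ (Fin d)))
    (hX : IsCompact X)
    (Sig : FiniteMeasure X → X → ℝ) (hB : ∀ μ, IsBoundedBorel (Sig μ))
    (F : ℝ) (hFpos : 0 < F) (hF : HypF Sig F)
    (μ₀ : FiniteMeasure X) (μ : ℝ → FiniteMeasure X)
    (hμ : IsMeasureSolution Sig μ₀ μ) :
    ∀ t, 0 ≤ t → ((μ t).mass : ℝ) ≤ (μ₀.mass : ℝ) * Real.exp (F * t) := by
  obtain ⟨h0, hcont, heq⟩ := hμ
  set m : ℝ → ℝ := fun s => ((μ s).mass : ℝ) with hm_def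
  have hm_nonneg : ∀ s, 0 ≤ m s := fun s => ((μ s).mass).coe_nonneg
  have hone : ∀ ν : FiniteMeasure X, ∫ _x, (1:ℝ) ∂(ν : Measure X) = (ν.mass : ℝ) := by
    intro ν
    rw [integral_const, smul_eq_mul, mul_one]
    rw [← ENNReal.coe_toReal, FiniteMeasure.ennreal_mass]
    rfl
  have hm_cont : ContinuousOn m (Ici 0) := by
    have := hcont (BoundedContinuousFunction.const X (1:ℝ))
    simpa [hone] using this
  have h1B : IsBoundedBorel (fun _ : X => (1:ℝ)) := ⟨measurable_const, 1, by simp⟩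
  set g : ℝ → ℝ := fun s => ∫ x, Sig (μ s) x ∂(μ s : Measure X) with hg_def
  have key : ∀ t, 0 ≤ t → m t = (μ₀.mass : ℝ) + ∫ s in (0:ℝ)..t, g s := by
    intro t ht
    have := heq _ h1B t ht
    simpa [hone, mul_one] using this
  have hg_le : ∀ s, g s ≤ F * m s := fun s => hF (μ s)
  -- continuous majorant
  set M : ℝ → ℝ := fun s => m (max s 0) with hM_def
  have hM_cont : Continuous M :=
    hm_cont.comp_continuous (continuous_id.max continuous_const)
      (fun s => le_max_right s 0)
  set G : ℝ → ℝ := fun s => F * M s with hG_def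
  have hG_cont : Continuous G := continuous_const.mul hM_cont
  have hG_nonneg : ∀ s, 0 ≤ G s := fun s => mul_nonneg hFpos.le (hm_nonneg _)
  have hMm : ∀ s, 0 ≤ s → M s = m s := by
    intro s hs; simp only [hM_def, max_eq_left hs]
  set ψ : ℝ → ℝ := fun t => (μ₀.mass : ℝ) + ∫ s in (0:ℝ)..t, G s with hψ_def
  have hle : ∀ t, 0 ≤ t → m t ≤ ψ t := by
    intro t ht
    rw [key t ht]
    apply add_le_add_right
    by_cases hig : IntervalIntegrable g MeasureTheory.volume 0 t
    · refine intervalIntegral.integral_mono_on ht hig (hG_cont.intervalIntegrable 0 t) ?_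
      intro s hs
      have := hg_le s
      rw [hG_def]
      simp only
      rw [hMm s hs.1]
      exact this
    · rw [intervalIntegral.integral_undef hig]
      exact intervalIntegral.integral_nonneg ht (fun s _ => hG_nonneg s)
  have hψ_deriv : ∀ x : ℝ, HasDerivAt ψ (G x) x := by
    intro x
    exact (intervalIntegral.integral_hasDerivAt_right (hG_cont.intervalIntegrable 0 x)
      (hG_cont.stronglyMeasurableAtFilter _ _) hG_cont.continuousAt).const_add _
  have hψ_cont : Continuous ψ := by
    have : Differentiable ℝ ψ := fun x => (hψ_deriv x).differentiableAt
    exact this.continuous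
  intro t ht
  have hψ0 : ψ 0 = (μ₀.mass : ℝ) := by simp [hψ_def]
  have key2 := norm_le_gronwallBound_of_norm_deriv_right_le (f := ψ) (f' := G)
    (δ := (μ₀.mass : ℝ)) (K := F) (ε := 0) (a := 0) (b := t)
    (hψ_cont.continuousOn)
    (fun x _ => (hψ_deriv x).hasDerivWithinAt)
    (by rw [hψ0, Real.norm_eq_abs, abs_of_nonneg μ₀.mass.coe_nonneg])
    ?_ t ⟨ht, le_refl t⟩
  · have hψt_nonneg : 0 ≤ ψ t := le_trans (hm_nonneg t) (hle t ht)
    calc m t ≤ ψ t := hle t ht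
      _ = ‖ψ t‖ := by rw [Real.norm_eq_abs, abs_of_nonneg hψt_nonneg]
      _ ≤ gronwallBound (μ₀.mass : ℝ) F 0 (t - 0) := key2
      _ = (μ₀.mass : ℝ) * Real.exp (F * t) := by
          rw [sub_zero, gronwallBound_ε0]
  · intro x hx
    have hψx_nonneg : 0 ≤ ψ x := le_trans (hm_nonneg x) (hle x hx.1)
    rw [Real.norm_eq_abs, abs_of_nonneg (hG_nonneg x), Real.norm_eq_abs,
      abs_of_nonneg hψx_nonneg, add_zero, hG_def]
    simp only
    rw [hMm x hx.1]
    exact mul_le_mul_of_nonneg_left (hle x hx.1) hFpos.le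
end

section
/- Assume the selection operator satisfies hypotheses (Lip) and (F), and let μ₀ be a nonnegative finite initial measure satisfying hypothesis (G): μ₀({x ∈ X : Σ[0](x) > 0}) > 0. If the measure solution (μ_t)_{t≥0} of the pure selection equation with initial datum μ₀ converges in total variation norm to a measure μ as t → ∞, then μ ≠ 0. -/
open MeasureTheory Filter Set

/- ### Auxiliary lemmas -/

lemma aux_measure_sub_zero {Y : Type*} [MeasurableSpace Y] (ν : Measure Y) : ν - 0 = ν :=
  le_antisymm Measure.sub_le (le_sInf (fun _ hd => by simpa using hd))

lemma aux_tvDist_zero_right {Y : Type*} [MeasurableSpace Y] (ν : Measure Y) :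
    tvDist ν 0 = (ν Set.univ).toReal := by
  simp [tvDist, aux_measure_sub_zero, Measure.zero_sub]

lemma aux_exp_le (x : ℝ) (h0 : 0 ≤ x) (h2 : x ≤ 1/2) : Real.exp (-(2*x)) ≤ 1 - x := by
  have h1 : (1:ℝ) + 2*x ≤ Real.exp (2*x) := by
    have := Real.add_one_le_exp (2*x); linarith
  have hpos : (0:ℝ) < 1 + 2*x := by linarith
  have hexppos : (0:ℝ) < Real.exp (2*x) := Real.exp_pos _
  rw [Real.exp_neg]
  have hinv : (Real.exp (2*x))⁻¹ ≤ (1+2*x)⁻¹ := by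
    apply inv_anti₀ hpos h1
  refine hinv.trans ?_
  rw [inv_eq_one_div, div_le_iff₀ hpos]
  nlinarith

lemma aux_seq (a : ℕ → ℝ) (q ε : ℝ) (hq0 : 0 ≤ q) (hq1 : q ≤ 1) (hε : 0 ≤ ε)
    (h : ∀ n, a n * q - ε ≤ a (n+1)) : ∀ n, a 0 * q ^ n - n * ε ≤ a n := by
  intro n
  induction n with
  | zero => simp
  | succ n ih =>
    have h1 := h n
    have h2 : (a 0 * q ^ n - n*ε) * q ≤ a n * q := mul_le_mul_of_nonneg_right ih hq0
    have h3 : (0:ℝ) ≤ (n:ℝ) * ε := by positivity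
    have h4 : (n:ℝ)*ε*q ≤ (n:ℝ)*ε := by nlinarith
    push_cast
    rw [pow_succ]
    nlinarith [pow_nonneg hq0 n]

/-- Under (Lip), (F) and (G): `μ₀({Σ[0] > 0}) > 0`, if the measure
solution converges in total variation norm to a measure `μ` as `t → ∞`, then `μ ≠ 0`. -/
theorem selection_limit_nonzero {d : ℕ} (X : Set (EuclideanSpace ℝ (Fin d)))
    (hX : IsCompact X)
    (Sig : FiniteMeasure X → X → ℝ) (hB : ∀ μ, IsBoundedBorel (Sig μ))
    (hLip : HypLip Sig) (hF : ∃ F > 0, HypF Sig F)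
    (μ₀ : FiniteMeasure X)
    (hG : 0 < (μ₀ : Measure X) {x | 0 < Sig 0 x})
    (μ : ℝ → FiniteMeasure X) (hμ : IsMeasureSolution Sig μ₀ μ)
    (μlim : FiniteMeasure X)
    (hconv : Tendsto (fun t => tvDist (μ t : Measure X) (μlim : Measure X))
      atTop (nhds 0)) :
    μlim ≠ 0 := by
  obtain ⟨k, hkpos, -, hk⟩ := hLip
  obtain ⟨hμ0, hcont, heq⟩ := hμ
  intro hne
  -- the total mass function
  set ψ : ℝ → ℝ := fun t => ((μ t : Measure X) Set.univ).toReal with hψdef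
  have hψ0 : Tendsto ψ atTop (nhds 0) := by
    have hrw : (fun t => tvDist (μ t : Measure X) (μlim : Measure X)) = ψ := by
      funext t
      rw [hne]
      exact aux_tvDist_zero_right _
    rwa [hrw] at hconv
  have hψnn : ∀ t, 0 ≤ ψ t := fun t => ENNReal.toReal_nonneg
  have hψcont : ContinuousOn ψ (Set.Ici 0) := by
    have h1 := hcont (BoundedContinuousFunction.const X (1:ℝ))
    have : (fun t => ∫ x, (BoundedContinuousFunction.const X (1:ℝ)) x ∂(μ t : Measure X)) = ψ := by
      funext t
      simp [hψdef]
      rfl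
    rwa [this] at h1
  -- global mass bound
  obtain ⟨M, hM1, hMbd⟩ : ∃ M : ℝ, 1 ≤ M ∧ ∀ s, 0 ≤ s → ψ s ≤ M := by
    obtain ⟨N, hN⟩ := Metric.tendsto_atTop.mp hψ0 1 one_pos
    set T₁ := max N 0 with hT₁def
    have hT₁ : ∀ s, T₁ ≤ s → ψ s ≤ 1 := by
      intro s hs
      have := hN s ((le_max_left N 0).trans hs)
      rw [Real.dist_eq, sub_zero] at this
      exact (le_abs_self _).trans this.le
    obtain ⟨C, hC⟩ := (isCompact_Icc (a := (0:ℝ)) (b := T₁)).exists_bound_of_continuousOn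
      (hψcont.mono (fun x hx => hx.1))
    refine ⟨max C 1, le_max_right _ _, fun s hs => ?_⟩
    rcases le_total s T₁ with h | h
    · have := hC s ⟨hs, h⟩
      rw [Real.norm_eq_abs] at this
      exact ((le_abs_self _).trans this).trans (le_max_left _ _)
    · exact (hT₁ s h).trans (le_max_right _ _)
  have hMpos : (0:ℝ) < M := lt_of_lt_of_le one_pos hM1
  -- small-measure threshold ε and the set A
  obtain ⟨ε, hεpos, hApos⟩ : ∃ ε > 0, 0 < (μ₀ : Measure X) {x | ε ≤ Sig 0 x} := by
    by_contra hcon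
    push_neg at hcon
    have hnull : (μ₀ : Measure X) {x | 0 < Sig 0 x} = 0 := by
      have hsub : {x : X | 0 < Sig 0 x} ⊆ ⋃ n : ℕ, {x : X | 1/((n:ℝ)+1) ≤ Sig 0 x} := by
        intro x hx
        have hx' : (0:ℝ) < Sig 0 x := hx
        obtain ⟨n, hn⟩ := exists_nat_one_div_lt hx'
        exact Set.mem_iUnion.2 ⟨n, le_of_lt hn⟩
      have h0 : (μ₀ : Measure X) (⋃ n : ℕ, {x : X | 1/((n:ℝ)+1) ≤ Sig 0 x}) = 0 :=
        measure_iUnion_null (fun n => le_antisymm (hcon _ (by positivity)) zero_le)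
      exact le_antisymm (h0 ▸ measure_mono hsub) zero_le
    rw [hnull] at hG
    exact lt_irrefl _ hG
  set A : Set X := {x | ε ≤ Sig 0 x} with hAdef
  have hmeasA : MeasurableSet A := measurableSet_le measurable_const (hB 0).1
  set f : X → ℝ := A.indicator 1 with hfdef
  have hfmeas : Measurable f := measurable_one.indicator hmeasA
  have hfnn : ∀ x, 0 ≤ f x := fun x => Set.indicator_nonneg (fun _ _ => zero_le_one) x
  have hfle : ∀ x, f x ≤ 1 := by
    intro x
    by_cases hx : x ∈ A <;> simp [hfdef, Set.indicator, hx]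
  have hfBB : IsBoundedBorel f := ⟨hfmeas, 1, fun x => abs_le.2 ⟨by linarith [hfnn x], hfle x⟩⟩
  set φ : ℝ → ℝ := fun t => ∫ x, f x ∂(μ t : Measure X) with hφdef
  set g : ℝ → ℝ := fun s => ∫ x, Sig (μ s) x * f x ∂(μ s : Measure X) with hgdef
  have hEQ : ∀ t, 0 ≤ t → φ t = (∫ x, f x ∂(μ₀ : Measure X)) + ∫ s in (0:ℝ)..t, g s :=
    fun t ht => heq f hfBB t ht
  set c : ℝ := ∫ x, f x ∂(μ₀ : Measure X) with hcdef
  have hcpos : 0 < c := by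
    have : c = ((μ₀ : Measure X) A).toReal := MeasureTheory.integral_indicator_one hmeasA
    rw [this]
    exact ENNReal.toReal_pos (ne_of_gt hApos) (measure_ne_top _ _)
  have hφ0 : φ 0 = c := by simp only [hφdef, hcdef, hμ0]
  have hφmeas : ∀ t, φ t = ((μ t : Measure X) A).toReal := fun t =>
    MeasureTheory.integral_indicator_one hmeasA
  have hφnn : ∀ t, 0 ≤ φ t := fun t => by rw [hφmeas]; exact ENNReal.toReal_nonneg
  have hφψ : ∀ t, φ t ≤ ψ t := by
    intro t
    rw [hφmeas]
    exact ENNReal.toReal_mono (measure_ne_top _ _) (measure_mono (Set.subset_univ A))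
  -- uniform bound on the selection rates
  have hkM := hkpos M hMpos
  have h0mass : (((0:FiniteMeasure X)).mass : ℝ) = 0 := by simp
  have hcoe0 : ((0:FiniteMeasure X) : Measure X) = 0 := rfl
  have hmassψ : ∀ s, (((μ s).mass : ℝ)) = ψ s := fun s => rfl
  have hdiffbd : ∀ s, 0 ≤ s → ∀ x, |Sig (μ s) x - Sig 0 x| ≤ k M * ψ s := by
    intro s hs x
    have h1 := hk M hMpos (μ s) 0 (by rw [hmassψ]; exact hMbd s hs) (by rw [h0mass]; linarith) x
    rwa [hcoe0, aux_tvDist_zero_right] at h1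
  obtain ⟨L, hL1, hL⟩ : ∃ L : ℝ, 1 ≤ L ∧ ∀ s, 0 ≤ s → ∀ x, |Sig (μ s) x| ≤ L := by
    obtain ⟨C₀, hC₀⟩ := (hB 0).2
    have hkMM : 0 ≤ k M * M := mul_nonneg hkM.le hMpos.le
    refine ⟨|C₀| + k M * M + 1, by linarith [abs_nonneg C₀], ?_⟩
    intro s hs x
    have h1 := hdiffbd s hs x
    have h2 : k M * ψ s ≤ k M * M := mul_le_mul_of_nonneg_left (hMbd s hs) hkM.le
    have h3 : |Sig 0 x| ≤ |C₀| := (hC₀ x).trans (le_abs_self C₀)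
    have h4 := abs_sub_abs_le_abs_sub (Sig (μ s) x) (Sig 0 x)
    linarith
  have hLpos : (0:ℝ) < L := lt_of_lt_of_le one_pos hL1
  -- integrand integrability and bounds on g
  have hint : ∀ s, Integrable (fun x => Sig (μ s) x * f x) (μ s : Measure X) := by
    intro s
    obtain ⟨C, hC⟩ := (hB (μ s)).2
    refine Integrable.mono' (integrable_const (|C| * 1))
      (((hB (μ s)).1.mul hfmeas).aestronglyMeasurable)
      (Filter.Eventually.of_forall (fun x => ?_))
    rw [Real.norm_eq_abs, abs_mul]
    have hf1 : |f x| ≤ 1 := abs_le.2 ⟨by linarith [hfnn x], hfle x⟩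
    exact mul_le_mul ((hC x).trans (le_abs_self C)) hf1 (abs_nonneg _) (abs_nonneg _)
  have hintf : ∀ s, Integrable f (μ s : Measure X) := by
    intro s
    refine Integrable.mono' (integrable_const 1) hfmeas.aestronglyMeasurable
      (Filter.Eventually.of_forall (fun x => ?_))
    rw [Real.norm_eq_abs]
    exact abs_le.2 ⟨by linarith [hfnn x], hfle x⟩
  have hgabs : ∀ s, 0 ≤ s → |g s| ≤ L * φ s := by
    intro s hs
    have h1 : |g s| ≤ ∫ x, |Sig (μ s) x * f x| ∂(μ s : Measure X) := by
      simpa only [Real.norm_eq_abs] using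
        norm_integral_le_integral_norm (μ := (μ s : Measure X)) (fun x => Sig (μ s) x * f x)
    have h2 : ∫ x, |Sig (μ s) x * f x| ∂(μ s : Measure X)
        ≤ ∫ x, L * f x ∂(μ s : Measure X) := by
      refine integral_mono (hint s).abs ((hintf s).const_mul L) (fun x => ?_)
      rw [abs_mul, abs_of_nonneg (hfnn x)]
      exact mul_le_mul_of_nonneg_right (hL s hs x) (hfnn x)
    have h3 : ∫ x, L * f x ∂(μ s : Measure X) = L * φ s := integral_const_mul L f
    linarith
  have hgM : ∀ s, 0 ≤ s → |g s| ≤ L * M := by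
    intro s hs
    refine (hgabs s hs).trans ?_
    exact mul_le_mul_of_nonneg_left ((hφψ s).trans (hMbd s hs)) (le_of_lt hLpos)
  by_cases hcase : ∀ t, 0 ≤ t → IntervalIntegrable g volume 0 t
  · -- Case A : the integral equation is "honest"
    have hstep : ∀ s t : ℝ, 0 ≤ s → s ≤ t →
        φ s * (1 - L*(t-s)) - L*L*M*(t-s)^2 ≤ φ t := by
      intro s t hs hst
      have h0t : (0:ℝ) ≤ t := hs.trans hst
      have hIIst : IntervalIntegrable g volume s t := (hcase t h0t).mono_set
        (Set.uIcc_subset_uIcc (by rw [Set.uIcc_of_le h0t]; exact ⟨hs, hst⟩)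
          (by rw [Set.uIcc_of_le h0t]; exact ⟨h0t, le_refl t⟩))
      have hdiff : ∀ u, s ≤ u → u ≤ t → φ u = φ s + ∫ v in s..u, g v := by
        intro u hsu hut
        have h0u : (0:ℝ) ≤ u := hs.trans hsu
        have hIIsu : IntervalIntegrable g volume s u := (hcase u h0u).mono_set
          (Set.uIcc_subset_uIcc (by rw [Set.uIcc_of_le h0u]; exact ⟨hs, hsu⟩)
            (by rw [Set.uIcc_of_le h0u]; exact ⟨h0u, le_refl u⟩))
        have hII0s : IntervalIntegrable g volume 0 s := hcase s hs
        have hadd := intervalIntegral.integral_add_adjacent_intervals hII0s hIIsu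
        rw [hEQ u h0u, hEQ s hs, ← hadd]
        ring
      have hφub : ∀ u, u ∈ Set.Icc s t → φ u ≤ φ s + L*M*(t-s) := by
        intro u hu
        have heq1 := hdiff u hu.1 hu.2
        have hb : ‖∫ v in s..u, g v‖ ≤ L*M * |u - s| := by
          refine intervalIntegral.norm_integral_le_of_norm_le_const (fun v hv => ?_)
          rw [Set.uIoc_of_le hu.1] at hv
          rw [Real.norm_eq_abs]
          exact hgM v (hs.trans hv.1.le)
        rw [Real.norm_eq_abs] at hb
        have habs := (abs_le.mp hb).2
        have hus : |u - s| = u - s := abs_of_nonneg (by linarith [hu.1])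
        rw [hus] at habs
        have hLM : (0:ℝ) ≤ L*M := mul_nonneg hLpos.le hMpos.le
        have h5 : L*M*(u-s) ≤ L*M*(t-s) := mul_le_mul_of_nonneg_left (by linarith [hu.2]) hLM
        linarith
      have hglb : ∀ u ∈ Set.Icc s t, -(L*(φ s + L*M*(t-s))) ≤ g u := by
        intro u hu
        have h1 := hgabs u (hs.trans hu.1)
        have h2 := hφub u hu
        have h3 : L * φ u ≤ L * (φ s + L*M*(t-s)) := mul_le_mul_of_nonneg_left h2 hLpos.le
        have h4 := (abs_le.mp h1).1
        linarith
      have hlow : (t - s) * (-(L*(φ s + L*M*(t-s)))) ≤ ∫ v in s..t, g v := by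
        have h1 := intervalIntegral.integral_mono_on hst
          (intervalIntegrable_const (c := -(L*(φ s + L*M*(t-s))))) hIIst hglb
        rwa [intervalIntegral.integral_const, smul_eq_mul] at h1
      have hft := hdiff t hst (le_refl t)
      nlinarith [hlow, hft]
    -- choose T beyond which the selection rate is positive on A
    obtain ⟨T, hT1, hgnn⟩ : ∃ T : ℝ, 1 ≤ T ∧ ∀ s, T ≤ s → 0 ≤ g s := by
      obtain ⟨N, hN⟩ := Metric.tendsto_atTop.mp hψ0 (ε/(2*k M)) (by positivity)
      refine ⟨max N 1, le_max_right _ _, ?_⟩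
      intro s hsT
      have hs0 : (0:ℝ) ≤ s := le_trans (by norm_num) ((le_max_right N 1).trans hsT)
      have hψs : ψ s ≤ ε/(2*k M) := by
        have := hN s ((le_max_left N 1).trans hsT)
        rw [Real.dist_eq, sub_zero] at this
        exact (le_abs_self _).trans this.le
      refine integral_nonneg (fun x => ?_)
      simp only [Pi.zero_apply]
      by_cases hx : x ∈ A
      · have hfx : f x = 1 := Set.indicator_of_mem hx 1
        rw [hfx, mul_one]
        have habs := (abs_le.mp (hdiffbd s hs0 x)).1
        have hx' : ε ≤ Sig 0 x := hx
        have h2 : k M * ψ s ≤ k M * (ε/(2*k M)) := mul_le_mul_of_nonneg_left hψs hkM.le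
        have h3 : k M * (ε/(2*k M)) = ε/2 := by field_simp
        linarith
      · have hfx : f x = 0 := Set.indicator_of_notMem hx 1
        rw [hfx, mul_zero]
        
    have hTpos : (0:ℝ) < T := lt_of_lt_of_le one_pos hT1
    -- φ is positive at time T
    have hφTpos : 0 < φ T := by
      set b : ℝ := c * Real.exp (-(2*L*T)) with hbdef
      have hbpos : 0 < b := mul_pos hcpos (Real.exp_pos _)
      obtain ⟨N, hN⟩ := exists_nat_gt (max (2*L*T) (L*L*M*T*T/b))
      have h2LT : 2*L*T < N := lt_of_le_of_lt (le_max_left _ _) hN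
      have hNpos : (0:ℝ) < N := by nlinarith
      set δ : ℝ := T / N with hδdef
      have hδpos : 0 < δ := div_pos hTpos hNpos
      have hLδ : L * δ ≤ 1/2 := by
        rw [hδdef, ← mul_div_assoc, div_le_iff₀ hNpos]
        linarith
      have hq0 : (0:ℝ) ≤ 1 - L*δ := by linarith
      have hq1 : 1 - L*δ ≤ 1 := by nlinarith [mul_pos hLpos hδpos]
      set a : ℕ → ℝ := fun n => φ ((n:ℝ) * δ) with hadef
      have hrec : ∀ n : ℕ, a n * (1 - L*δ) - L*L*M*δ^2 ≤ a (n+1) := by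
        intro n
        have h1 : (0:ℝ) ≤ (n:ℝ)*δ := by positivity
        have h2 : (n:ℝ)*δ ≤ ((n:ℝ)+1)*δ := by nlinarith [hδpos.le]
        have h3 := hstep ((n:ℝ)*δ) (((n:ℝ)+1)*δ) h1 h2
        have hts : ((n:ℝ)+1)*δ - (n:ℝ)*δ = δ := by ring
        rw [hts] at h3
        have hcast : ((n+1 : ℕ):ℝ) = (n:ℝ)+1 := by push_cast; ring
        simp only [hadef, hcast]
        exact h3
      have key := aux_seq a (1-L*δ) (L*L*M*δ^2) hq0 hq1 (by positivity) hrec N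
      have ha0 : a 0 = c := by
        simp only [hadef, Nat.cast_zero, zero_mul]
        exact hφ0
      have haN : a N = φ T := by
        have hNδ : (N:ℝ)*δ = T := by
          rw [hδdef]
          field_simp
        simp only [hadef, hNδ]
      have hqexp : Real.exp (-(2*L*T)) ≤ (1-L*δ)^N := by
        have h1 : Real.exp (-(2*(L*δ))) ≤ 1 - L*δ :=
          aux_exp_le (L*δ) (by positivity) hLδ
        have h2 : Real.exp (-(2*(L*δ)))^N ≤ (1-L*δ)^N :=
          pow_le_pow_left₀ (Real.exp_pos _).le h1 N
        refine le_trans (le_of_eq ?_) h2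
        rw [← Real.exp_nat_mul]
        congr 1
        rw [hδdef]
        field_simp
      have hcexp : c * Real.exp (-(2*L*T)) ≤ c * (1-L*δ)^N :=
        mul_le_mul_of_nonneg_left hqexp hcpos.le
      have hfrac : (N:ℝ) * (L*L*M*δ^2) = L*L*M*T*T/N := by
        rw [hδdef]
        field_simp
      have hNbig : L*L*M*T*T/b < N := lt_of_le_of_lt (le_max_right _ _) hN
      have hsmall : L*L*M*T*T/N < b := by
        rw [div_lt_iff₀ hNpos]
        rw [div_lt_iff₀ hbpos] at hNbig
        linarith
      have : b - L*L*M*T*T/N ≤ φ T := by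
        rw [← haN]
        calc b - L*L*M*T*T/N ≤ c * (1-L*δ)^N - (N:ℝ)*(L*L*M*δ^2) := by
              rw [hfrac, hbdef]; linarith
          _ = a 0 * (1-L*δ)^N - (N:ℝ)*(L*L*M*δ^2) := by rw [ha0]
          _ ≤ a N := key
      linarith
    -- φ is monotone after T
    have hmono : ∀ t, T ≤ t → φ T ≤ φ t := by
      intro t ht
      have h0T : (0:ℝ) ≤ T := le_of_lt hTpos
      have h0t : (0:ℝ) ≤ t := h0T.trans ht
      have hTt : IntervalIntegrable g volume T t :=
        (hcase t h0t).mono_set (Set.uIcc_subset_uIcc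
          (by rw [Set.uIcc_of_le h0t]; exact ⟨h0T, ht⟩)
          (by rw [Set.uIcc_of_le h0t]; exact ⟨h0t, le_refl t⟩))
      have h0T' : IntervalIntegrable g volume 0 T := hcase T h0T
      have hadd : (∫ s in (0:ℝ)..T, g s) + ∫ s in T..t, g s = ∫ s in (0:ℝ)..t, g s :=
        intervalIntegral.integral_add_adjacent_intervals h0T' hTt
      have h1 := hEQ T h0T
      have h2 := hEQ t h0t
      have hge : 0 ≤ ∫ s in T..t, g s :=
        intervalIntegral.integral_nonneg ht (fun u hu => hgnn u hu.1)
      rw [h2, ← hadd, ← add_assoc, ← h1]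
      linarith
    -- contradiction with ψ → 0
    obtain ⟨t, hTt, hψt⟩ : ∃ t, T ≤ t ∧ ψ t < φ T := by
      obtain ⟨N₂, hN₂⟩ := Metric.tendsto_atTop.mp hψ0 (φ T) hφTpos
      refine ⟨max N₂ T, le_max_right _ _, ?_⟩
      have := hN₂ (max N₂ T) (le_max_left _ _)
      rw [Real.dist_eq, sub_zero] at this
      exact lt_of_le_of_lt (le_abs_self _) this
    have := (hmono t hTt).trans (hφψ t)
    linarith
  · -- Case B : the time-integral is the junk value 0 from some point on
    push_neg at hcase
    obtain ⟨t₀, ht₀0, ht₀⟩ := hcase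
    have hconst : ∀ t, t₀ ≤ t → φ t = c := by
      intro t ht
      have h0t : (0:ℝ) ≤ t := ht₀0.trans ht
      have : ¬ IntervalIntegrable g volume 0 t := by
        intro hI
        exact ht₀ (hI.mono_set (Set.uIcc_subset_uIcc
          (by rw [Set.uIcc_of_le h0t]; exact ⟨le_refl 0, h0t⟩)
          (by rw [Set.uIcc_of_le h0t]; exact ⟨ht₀0, ht⟩)))
      have h2 := hEQ t h0t
      rw [intervalIntegral.integral_undef this] at h2
      simpa using h2
    obtain ⟨t, htt₀, hψt⟩ : ∃ t, t₀ ≤ t ∧ ψ t < c := by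
      obtain ⟨N₂, hN₂⟩ := Metric.tendsto_atTop.mp hψ0 c hcpos
      refine ⟨max N₂ t₀, le_max_right _ _, ?_⟩
      have := hN₂ (max N₂ t₀) (le_max_left _ _)
      rw [Real.dist_eq, sub_zero] at this
      exact lt_of_le_of_lt (le_abs_self _) this
    have h1 := hconst t htt₀
    have h2 := hφψ t
    linarith
end

section
/- Let (μ_t)_{t≥0} be the nonnegative measure solution of the cannibalism model with initial datum μ₀ satisfying μ₀(X) = 1, M := sup supp μ₀ ∈ supp μ₀, M > 0, and ∫_X x dμ₀(x) ≤ r/(1−α). Then the first moment converges: lim_{t→∞} ∫_X x dμ_t(x) = r/(1−α). -/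
open MeasureTheory Filter Set

/-- The cannibalism selection operator `Σ[μ](x) = r + αxμ(X) − ∫_X y dμ(y)` on `X = [0,A]`. -/
noncomputable def cannibalSig (A r α : ℝ) :
    FiniteMeasure (Set.Icc (0:ℝ) A) → (Set.Icc (0:ℝ) A) → ℝ :=
  fun μ x => r + α * (x : ℝ) * (μ.mass : ℝ) - ∫ y, (y : ℝ) ∂(μ : Measure (Set.Icc (0:ℝ) A))


lemma ftc_right' {G : ℝ → ℝ} (hG : ContinuousOn G (Ici 0)) {t : ℝ} (ht : 0 ≤ t) :
    HasDerivWithinAt (fun v => ∫ s in (0:ℝ)..v, G s) (G t) (Ici t) t := by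
  have hInt : IntervalIntegrable G MeasureTheory.volume 0 t :=
    (hG.mono (by rw [uIcc_of_le ht]; exact Icc_subset_Ici_self)).intervalIntegrable
  refine intervalIntegral.integral_hasDerivWithinAt_right hInt
    ⟨Ici 0, mem_of_superset self_mem_nhdsWithin (fun y hy => le_of_lt (lt_of_le_of_lt ht hy)),
      hG.aestronglyMeasurable measurableSet_Ici⟩
    (((hG t ht)).mono (fun y hy => le_trans ht (le_of_lt hy)))

lemma ftc_at' {G : ℝ → ℝ} (hG : ContinuousOn G (Ici 0)) {t : ℝ} (ht : 0 < t) :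
    HasDerivAt (fun v => ∫ s in (0:ℝ)..v, G s) (G t) t := by
  have hInt : IntervalIntegrable G MeasureTheory.volume 0 t :=
    (hG.mono (by rw [uIcc_of_le ht.le]; exact Icc_subset_Ici_self)).intervalIntegrable
  exact intervalIntegral.integral_hasDerivAt_right hInt
    ⟨Ici 0, Ici_mem_nhds ht, hG.aestronglyMeasurable measurableSet_Ici⟩
    (hG.continuousAt (Ici_mem_nhds ht))

lemma primitive_contOn {G : ℝ → ℝ} (hG : ContinuousOn G (Ici 0)) :
    ContinuousOn (fun v => ∫ s in (0:ℝ)..v, G s) (Ici 0) := by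
  intro x hx
  rcases eq_or_lt_of_le (mem_Ici.1 hx : (0:ℝ) ≤ x) with h | h
  · exact (h ▸ (ftc_right' hG hx).continuousWithinAt)
  · exact ((ftc_at' hG h).continuousAt).continuousWithinAt

lemma int_exp_mul {r : ℝ} (hr : r ≠ 0) (a b : ℝ) :
    ∫ s in a..b, Real.exp (r * s) = (Real.exp (r * b) - Real.exp (r * a)) / r := by
  have h := intervalIntegral.mul_integral_comp_mul_left (a := a) (b := b) (c := r) (f := Real.exp)
  rw [integral_exp] at h
  field_simp
  exact h

lemma avg_limit {r L : ℝ} (hr : 0 < r) {q : ℝ → ℝ} (hqc : ContinuousOn q (Ici 0))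
    (hq : Tendsto q atTop (nhds L)) :
    Tendsto (fun t => Real.exp (-(r * t)) * ∫ s in (0:ℝ)..t, Real.exp (r * s) * q s)
      atTop (nhds (L / r)) := by
  rw [Metric.tendsto_nhds]
  intro ε hε
  obtain ⟨T₀, hT₀⟩ := (Metric.tendsto_atTop.1 hq) (ε * r / 4) (by positivity)
  set T : ℝ := max T₀ 0 with hTdef
  have hT0 : (0:ℝ) ≤ T := le_max_right _ _
  have hqT : ∀ s, T ≤ s → |q s - L| ≤ ε * r / 4 := by
    intro s hs
    have := hT₀ s (le_trans (le_max_left _ _) hs)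
    rw [Real.dist_eq] at this; exact this.le
  set J : ℝ := ∫ s in (0:ℝ)..T, Real.exp (r * s) * q s with hJdef
  set Q : ℝ := Real.exp (r * T) with hQdef
  set K : ℝ := |J - Q * L / r| with hKdef
  have hK0 : 0 ≤ K := abs_nonneg _
  have hexp0 : Tendsto (fun t : ℝ => Real.exp (-(r * t))) atTop (nhds 0) :=
    Real.tendsto_exp_neg_atTop_nhds_zero.comp (Filter.Tendsto.const_mul_atTop hr tendsto_id)
  have hsmall : ∀ᶠ t in atTop, Real.exp (-(r * t)) < ε / (4 * (K + 1)) :=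
    hexp0.eventually_lt_const (by positivity)
  filter_upwards [hsmall, eventually_ge_atTop T] with t hPi_small htT
  have ht0 : (0:ℝ) ≤ t := le_trans hT0 htT
  -- integrabilities
  have hcont_integrand : ContinuousOn (fun s => Real.exp (r * s) * q s) (Ici 0) :=
    ((Real.continuous_exp.comp (continuous_const.mul continuous_id)).continuousOn).mul hqc
  have hI1 : IntervalIntegrable (fun s => Real.exp (r * s) * q s) MeasureTheory.volume 0 T :=
    (hcont_integrand.mono (by rw [uIcc_of_le hT0]; exact Icc_subset_Ici_self)).intervalIntegrable
  have hIccT : Set.uIcc T t ⊆ Ici 0 := by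
    rw [uIcc_of_le htT]; exact fun y hy => le_trans hT0 hy.1
  have hI2 : IntervalIntegrable (fun s => Real.exp (r * s) * q s) MeasureTheory.volume T t :=
    (hcont_integrand.mono hIccT).intervalIntegrable
  have hexpc : ContinuousOn (fun s : ℝ => Real.exp (r * s)) (Ici 0) :=
    (Real.continuous_exp.comp (continuous_const.mul continuous_id)).continuousOn
  have hI3 : IntervalIntegrable (fun s => Real.exp (r * s) * (q s - L))
      MeasureTheory.volume T t :=
    ((hexpc.mul (hqc.sub continuousOn_const)).mono hIccT).intervalIntegrable
  have hI4 : IntervalIntegrable (fun s => Real.exp (r * s) * L) MeasureTheory.volume T t :=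
    ((hexpc.mul continuousOn_const).mono hIccT).intervalIntegrable
  have hIabs : IntervalIntegrable (fun s => |Real.exp (r * s) * (q s - L)|)
      MeasureTheory.volume T t := hI3.abs
  have hI5 : IntervalIntegrable (fun s => Real.exp (r * s) * (ε * r / 4))
      MeasureTheory.volume T t :=
    ((hexpc.mul continuousOn_const).mono hIccT).intervalIntegrable
  -- decomposition
  have hsplit : (∫ s in (0:ℝ)..t, Real.exp (r * s) * q s)
      = J + ∫ s in T..t, Real.exp (r * s) * q s :=
    (intervalIntegral.integral_add_adjacent_intervals hI1 hI2).symm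
  have hsplit2 : (∫ s in T..t, Real.exp (r * s) * q s)
      = (∫ s in T..t, Real.exp (r * s) * (q s - L)) + ∫ s in T..t, Real.exp (r * s) * L := by
    rw [← intervalIntegral.integral_add hI3 hI4]
    apply intervalIntegral.integral_congr
    intro s _
    ring
  have hconstint : (∫ s in T..t, Real.exp (r * s) * L)
      = (Real.exp (r * t) - Real.exp (r * T)) / r * L := by
    rw [intervalIntegral.integral_mul_const, int_exp_mul hr.ne']
  set R : ℝ := ∫ s in T..t, Real.exp (r * s) * (q s - L) with hRdef
  have hRbound : |R| ≤ ε * r / 4 * ((Real.exp (r * t) - Real.exp (r * T)) / r) := by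
    have h1 : |R| ≤ ∫ s in T..t, |Real.exp (r * s) * (q s - L)| :=
      intervalIntegral.abs_integral_le_integral_abs htT
    have h2 : (∫ s in T..t, |Real.exp (r * s) * (q s - L)|)
        ≤ ∫ s in T..t, Real.exp (r * s) * (ε * r / 4) := by
      apply intervalIntegral.integral_mono_on htT hIabs hI5
      intro x hx
      rw [abs_mul, abs_of_pos (Real.exp_pos _)]
      exact mul_le_mul_of_nonneg_left (hqT x hx.1) (Real.exp_pos _).le
    have h3 : (∫ s in T..t, Real.exp (r * s) * (ε * r / 4))
        = (Real.exp (r * t) - Real.exp (r * T)) / r * (ε * r / 4) := by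
      rw [intervalIntegral.integral_mul_const, int_exp_mul hr.ne']
    calc |R| ≤ ∫ s in T..t, Real.exp (r * s) * (ε * r / 4) := le_trans h1 h2
    _ = ε * r / 4 * ((Real.exp (r * t) - Real.exp (r * T)) / r) := by rw [h3]; ring
  -- numeric finish
  rw [Real.dist_eq, hsplit, hsplit2, hconstint]
  set P : ℝ := Real.exp (r * t) with hPdef
  set Pi : ℝ := Real.exp (-(r * t)) with hPidef
  have hPiP : Pi * P = 1 := by
    rw [hPidef, hPdef, ← Real.exp_add]; simp
  have hPpos : 0 < P := Real.exp_pos _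
  have hPipos : 0 < Pi := Real.exp_pos _
  have hQpos : 0 < Q := Real.exp_pos _
  have hQP : Q ≤ P := Real.exp_le_exp.2 (by nlinarith)
  rw [← hQdef] at hRbound ⊢
  have hKK : |J - Q * L / r| = K := rfl
  clear_value J Q K R P Pi
  clear hsplit hsplit2 hconstint hI1 hI2 hI3 hI4 hI5 hIabs hqT hT₀ hsmall hexp0
  have hε4 : (0:ℝ) < ε / 4 := by positivity
  have hrw : Pi * (J + (R + (P - Q) / r * L)) - L / r
      = Pi * (J - Q * L / r) + Pi * R := by
    field_simp
    linear_combination L * hPiP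
  rw [hrw]
  have habs : |Pi * (J - Q * L / r) + Pi * R| ≤ Pi * K + Pi * |R| := by
    calc |Pi * (J - Q * L / r) + Pi * R| ≤ |Pi * (J - Q * L / r)| + |Pi * R| := abs_add_le _ _
    _ = Pi * K + Pi * |R| := by rw [abs_mul, abs_mul, abs_of_pos hPipos, hKK]
  have hterm1 : Pi * K < ε / 4 := by
    have h8 := mul_lt_mul_of_pos_right hPi_small (show (0:ℝ) < K + 1 by linarith)
    have h4 : ε / (4 * (K + 1)) * (K + 1) = ε / 4 := by
      field_simp
    nlinarith [hPipos]
  have hterm2 : Pi * |R| ≤ ε / 4 := by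
    have h5 : Pi * |R| ≤ Pi * (ε * r / 4 * ((P - Q) / r)) :=
      mul_le_mul_of_nonneg_left hRbound hPipos.le
    have h6 : Pi * (ε * r / 4 * ((P - Q) / r)) = ε / 4 * (Pi * (P - Q)) := by
      field_simp
    have h7 : Pi * (P - Q) ≤ 1 := by nlinarith
    nlinarith
  calc |Pi * (J - Q * L / r) + Pi * R| ≤ Pi * K + Pi * |R| := habs
  _ < ε := by linarith

/-- For the cannibalism model with `μ₀(X) = 1`,
`M := sup supp μ₀ ∈ supp μ₀`, `M > 0` and `∫ x dμ₀ ≤ r/(1−α)`, the first moment of the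
solution converges: `∫ x dμ_t → r/(1−α)` as `t → ∞`. -/
theorem cannibalism_first_moment (A : ℝ) (hA : 0 < A) (r : ℝ) (hr : 0 < r)
    (α : ℝ) (hα : 0 < α) (hα1 : α < 1)
    (μ₀ : FiniteMeasure (Set.Icc (0:ℝ) A)) (hmass : (μ₀.mass : ℝ) = 1)
    (μ : ℝ → FiniteMeasure (Set.Icc (0:ℝ) A))
    (hμ : IsMeasureSolution (cannibalSig A r α) μ₀ μ)
    (xM : Set.Icc (0:ℝ) A) (hxM : xM ∈ msupport (μ₀ : Measure (Set.Icc (0:ℝ) A)))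
    (hsup : (xM : ℝ) = sSup ((fun y : Set.Icc (0:ℝ) A => (y : ℝ)) ''
      msupport (μ₀ : Measure (Set.Icc (0:ℝ) A))))
    (hMpos : 0 < (xM : ℝ))
    (hmom : (∫ x, (x : ℝ) ∂(μ₀ : Measure (Set.Icc (0:ℝ) A))) ≤ r / (1 - α)) :
    Tendsto (fun t => ∫ x, (x : ℝ) ∂(μ t : Measure (Set.Icc (0:ℝ) A))) atTop
      (nhds (r / (1 - α))) := by
  obtain ⟨hμ0, hcont, heq⟩ := hμ
  have hα1' : (0:ℝ) < 1 - α := by linarith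
  have intC : ∀ (ν : FiniteMeasure (Set.Icc (0:ℝ) A)) (g : Set.Icc (0:ℝ) A → ℝ), Continuous g →
      Integrable g (ν : Measure (Set.Icc (0:ℝ) A)) := fun ν g hg => by
    exact
      (BoundedContinuousFunction.mkOfCompact (⟨g, hg⟩ : C(Set.Icc (0:ℝ) A, ℝ))).integrable (ν : Measure (Set.Icc (0:ℝ) A))
  set m : ℝ → ℝ := fun t => ((μ t).mass : ℝ) with hm_def
  set u : ℝ → ℝ := fun t => ∫ x, (x:ℝ) ∂(μ t : Measure (Set.Icc (0:ℝ) A)) with hu_def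
  set w : ℝ → ℝ := fun t => ∫ x, (x:ℝ) * (x:ℝ) ∂(μ t : Measure (Set.Icc (0:ℝ) A)) with hw_def
  have hmass_int : ∀ t, ∫ _x, (1:ℝ) ∂(μ t : Measure (Set.Icc (0:ℝ) A)) = m t := by
    intro t; simp [hm_def, ← FiniteMeasure.ennreal_mass]; rfl
  have hm0 : m 0 = 1 := by rw [hm_def]; simpa [hμ0] using hmass
  have hu0 : u 0 = ∫ x, (x:ℝ) ∂(μ₀ : Measure (Set.Icc (0:ℝ) A)) := by rw [hu_def]; simp [hμ0]
  have hw_nonneg : ∀ t, 0 ≤ w t := fun t =>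
    integral_nonneg (fun x => mul_self_nonneg _)
  -- continuity of moments
  have hcont_m : ContinuousOn m (Ici 0) := by
    refine (hcont (BoundedContinuousFunction.mkOfCompact
      (⟨fun _ => (1:ℝ), continuous_const⟩ : C(Set.Icc (0:ℝ) A, ℝ)))).congr ?_
    intro t ht
    simpa using (hmass_int t).symm
  have hcont_u : ContinuousOn u (Ici 0) := by
    refine (hcont (BoundedContinuousFunction.mkOfCompact
      (⟨fun x => (x:ℝ), continuous_subtype_val⟩ : C(Set.Icc (0:ℝ) A, ℝ)))).congr ?_
    intro t ht
    simp [hu_def]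
  have hcont_w : ContinuousOn w (Ici 0) := by
    refine (hcont (BoundedContinuousFunction.mkOfCompact
      (⟨fun x => (x:ℝ) * (x:ℝ), continuous_subtype_val.mul continuous_subtype_val⟩
        : C(Set.Icc (0:ℝ) A, ℝ)))).congr ?_
    intro t ht
    simp [hw_def]
  -- bounded Borel
  have hbb1 : IsBoundedBorel (fun _ : Set.Icc (0:ℝ) A => (1:ℝ)) := ⟨measurable_const, 1, fun x => by simp⟩
  have hbbx : IsBoundedBorel (fun x : Set.Icc (0:ℝ) A => (x:ℝ)) :=
    ⟨continuous_subtype_val.measurable, A, fun x => by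
      rw [abs_of_nonneg x.2.1]; exact x.2.2⟩
  -- expansion of the selection integral
  have expand : ∀ (s : ℝ) (g : Set.Icc (0:ℝ) A → ℝ), Continuous g →
      (∫ x, cannibalSig A r α (μ s) x * g x ∂(μ s : Measure (Set.Icc (0:ℝ) A)))
        = r * (∫ x, g x ∂(μ s : Measure (Set.Icc (0:ℝ) A)))
          + α * m s * (∫ x, (x:ℝ) * g x ∂(μ s : Measure (Set.Icc (0:ℝ) A)))
          - u s * ∫ x, g x ∂(μ s : Measure (Set.Icc (0:ℝ) A)) := by
    intro s g hg
    have hpt : ∀ x : Set.Icc (0:ℝ) A, cannibalSig A r α (μ s) x * g x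
        = (r * g x + α * m s * ((x:ℝ) * g x)) - u s * g x := by
      intro x; simp only [cannibalSig, hm_def, hu_def]; ring
    have hInt1 : Integrable (fun x : Set.Icc (0:ℝ) A => r * g x) (μ s : Measure (Set.Icc (0:ℝ) A)) :=
      (intC (μ s) g hg).const_mul r
    have hInt2 : Integrable (fun x : Set.Icc (0:ℝ) A => α * m s * ((x:ℝ) * g x)) (μ s : Measure (Set.Icc (0:ℝ) A)) :=
      (intC (μ s) _ (continuous_subtype_val.mul hg)).const_mul _
    have hInt3 : Integrable (fun x : Set.Icc (0:ℝ) A => u s * g x) (μ s : Measure (Set.Icc (0:ℝ) A)) :=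
      (intC (μ s) g hg).const_mul _
    have hInt12 : Integrable (fun x : Set.Icc (0:ℝ) A =>
        r * g x + α * m s * ((x:ℝ) * g x)) ((μ s : Measure (Set.Icc (0:ℝ) A))) :=
      hInt1.add hInt2
    rw [show (fun x : Set.Icc (0:ℝ) A => cannibalSig A r α (μ s) x * g x)
        = fun x : Set.Icc (0:ℝ) A => (r * g x + α * m s * ((x:ℝ) * g x)) - u s * g x
        from funext hpt]
    rw [integral_sub hInt12 hInt3, integral_add hInt1 hInt2,
      integral_const_mul, integral_const_mul, integral_const_mul]
  -- moment equations
  have eq_m : ∀ t, 0 ≤ t → m t = 1 + ∫ s in (0:ℝ)..t, (r - (1 - α) * u s) * m s := by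
    intro t ht
    have h : (∫ _x, (1:ℝ) ∂(μ t : Measure (Set.Icc (0:ℝ) A)))
        = (∫ _x, (1:ℝ) ∂(μ₀ : Measure (Set.Icc (0:ℝ) A)))
          + ∫ s in (0:ℝ)..t, ∫ x, cannibalSig A r α (μ s) x * 1
              ∂(μ s : Measure (Set.Icc (0:ℝ) A)) :=
      heq (fun _ => (1:ℝ)) hbb1 t ht
    rw [hmass_int t] at h
    rw [h, show (∫ _x, (1:ℝ) ∂(μ₀ : Measure (Set.Icc (0:ℝ) A))) = 1 from
      (by rw [← hμ0]; exact (hmass_int 0).trans hm0)]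
    congr 1
    apply intervalIntegral.integral_congr
    intro s _
    refine Eq.trans (expand s (fun _ => (1:ℝ)) continuous_const) ?_
    simp only [mul_one]
    rw [hmass_int s]
    show r * m s + α * m s * u s - u s * m s = (r - (1 - α) * u s) * m s
    ring
  have eq_u : ∀ t, 0 ≤ t → u t = u 0
      + ∫ s in (0:ℝ)..t, (r * u s + α * m s * w s - u s * u s) := by
    intro t ht
    have h : u t = (∫ x, (x:ℝ) ∂(μ₀ : Measure (Set.Icc (0:ℝ) A)))
        + ∫ s in (0:ℝ)..t, ∫ x, cannibalSig A r α (μ s) x * (x:ℝ)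
            ∂(μ s : Measure (Set.Icc (0:ℝ) A)) :=
      heq (fun x => (x:ℝ)) hbbx t ht
    rw [h, ← hu0]
    congr 1
    apply intervalIntegral.integral_congr
    intro s _
    refine Eq.trans (expand s (fun x => (x:ℝ)) continuous_subtype_val) ?_
    show r * u s + α * m s * w s - u s * u s = r * u s + α * m s * w s - u s * u s
    rfl
  -- continuity of integrands
  have hGm_cont : ContinuousOn (fun s => (r - (1 - α) * u s) * m s) (Ici 0) :=
    (continuousOn_const.sub (continuousOn_const.mul hcont_u)).mul hcont_m
  have hGu_cont : ContinuousOn (fun s => r * u s + α * m s * w s - u s * u s) (Ici 0) :=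
    ((continuousOn_const.mul hcont_u).add
      ((continuousOn_const.mul hcont_m).mul hcont_w)).sub (hcont_u.mul hcont_u)
  -- derivatives
  have hmDR : ∀ t, 0 ≤ t →
      HasDerivWithinAt m ((r - (1 - α) * u t) * m t) (Ici t) t := by
    intro t ht
    have hF := (ftc_right' hGm_cont ht).const_add (1:ℝ)
    exact hF.congr (fun y hy => eq_m y (le_trans ht hy)) (eq_m t ht)
  have hmDA : ∀ t, 0 < t → HasDerivAt m ((r - (1 - α) * u t) * m t) t := by
    intro t ht
    have hF := (ftc_at' hGm_cont ht).const_add (1:ℝ)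
    apply hF.congr_of_eventuallyEq
    filter_upwards [eventually_gt_nhds ht] with y hy using eq_m y hy.le
  have huDR : ∀ t, 0 ≤ t →
      HasDerivWithinAt u (r * u t + α * m t * w t - u t * u t) (Ici t) t := by
    intro t ht
    have hF := (ftc_right' hGu_cont ht).const_add (u 0)
    exact hF.congr (fun y hy => eq_u y (le_trans ht hy)) (eq_u t ht)
  have huDA : ∀ t, 0 < t → HasDerivAt u (r * u t + α * m t * w t - u t * u t) t := by
    intro t ht
    have hF := (ftc_at' hGu_cont ht).const_add (u 0)
    apply hF.congr_of_eventuallyEq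
    filter_upwards [eventually_gt_nhds ht] with y hy using eq_u y hy.le
  -- positivity of the mass
  have hg1c : ContinuousOn (fun s => -(r - (1 - α) * u s)) (Ici 0) :=
    (continuousOn_const.sub (continuousOn_const.mul hcont_u)).neg
  have hm_exp : ∀ t, 0 ≤ t →
      m t * Real.exp (∫ s in (0:ℝ)..t, -(r - (1 - α) * u s)) = 1 := by
    intro t ht
    have key := eq_of_has_deriv_right_eq (a := 0) (b := t)
      (f := fun v => m v * Real.exp (∫ s in (0:ℝ)..v, -(r - (1 - α) * u s)))
      (g := fun _ => (1:ℝ)) (f' := fun _ => (0:ℝ))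
      (fun x hx => by
        have h1 := (hmDR x hx.1).mul ((ftc_right' hg1c hx.1).exp)
        convert h1 using 1
        · rfl
        · rfl
        ring)
      (fun x _ => hasDerivWithinAt_const _ _ _)
      (((hcont_m.mono Icc_subset_Ici_self).mul
        (Real.continuous_exp.comp_continuousOn
          ((primitive_contOn hg1c).mono Icc_subset_Ici_self))))
      continuousOn_const
      (by simp [hm0])
    exact key t ⟨ht, le_rfl⟩
  have hm_pos : ∀ t, 0 ≤ t → 0 < m t := by
    intro t ht
    have h1 := hm_exp t ht
    nlinarith [Real.exp_pos (∫ s in (0:ℝ)..t, -(r - (1 - α) * u s)),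
      mul_self_nonneg (m t)]
  -- positivity of the first moment
  have hu0pos : 0 < u 0 := by
    rw [hu0]
    have hUopen : IsOpen ((fun y : Set.Icc (0:ℝ) A => (y:ℝ)) ⁻¹' Ioi ((xM:ℝ)/2)) :=
      isOpen_Ioi.preimage continuous_subtype_val
    have hUmem : ((fun y : Set.Icc (0:ℝ) A => (y:ℝ)) ⁻¹' Ioi ((xM:ℝ)/2)) ∈ nhds xM :=
      hUopen.mem_nhds (by simp only [mem_preimage, mem_Ioi]; linarith)
    have hμU : (μ₀ : Measure (Set.Icc (0:ℝ) A))
        ((fun y : Set.Icc (0:ℝ) A => (y:ℝ)) ⁻¹' Ioi ((xM:ℝ)/2)) ≠ 0 := hxM _ hUmem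
    have hμUlt : (μ₀ : Measure (Set.Icc (0:ℝ) A))
        ((fun y : Set.Icc (0:ℝ) A => (y:ℝ)) ⁻¹' Ioi ((xM:ℝ)/2)) ≠ ⊤ := measure_ne_top _ _
    have hpos : 0 < ((μ₀ : Measure (Set.Icc (0:ℝ) A))
        ((fun y : Set.Icc (0:ℝ) A => (y:ℝ)) ⁻¹' Ioi ((xM:ℝ)/2))).toReal :=
      ENNReal.toReal_pos hμU hμUlt
    have h1 : (xM:ℝ)/2 * ((μ₀ : Measure (Set.Icc (0:ℝ) A))
          ((fun y : Set.Icc (0:ℝ) A => (y:ℝ)) ⁻¹' Ioi ((xM:ℝ)/2))).toReal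
        ≤ ∫ x in ((fun y : Set.Icc (0:ℝ) A => (y:ℝ)) ⁻¹' Ioi ((xM:ℝ)/2)), (x:ℝ)
            ∂(μ₀ : Measure (Set.Icc (0:ℝ) A)) :=
      by
        have := setIntegral_ge_of_const_le_real hUopen.measurableSet hμUlt
          (fun x hx => (le_of_lt hx))
          ((intC μ₀ _ continuous_subtype_val).integrableOn)
        exact this
    have h2 : (∫ x in ((fun y : Set.Icc (0:ℝ) A => (y:ℝ)) ⁻¹' Ioi ((xM:ℝ)/2)), (x:ℝ)
          ∂(μ₀ : Measure (Set.Icc (0:ℝ) A)))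
        ≤ ∫ x, (x:ℝ) ∂(μ₀ : Measure (Set.Icc (0:ℝ) A)) :=
      setIntegral_le_integral (intC μ₀ _ continuous_subtype_val)
        (Filter.Eventually.of_forall fun x => x.2.1)
    nlinarith [hpos]
  have hg2c : ContinuousOn (fun s => u s - r) (Ici 0) := hcont_u.sub continuousOn_const
  have hu_pos : ∀ t, 0 ≤ t → 0 < u t := by
    intro t ht
    have hmono : MonotoneOn (fun v => u v * Real.exp (∫ s in (0:ℝ)..v, (u s - r))) (Ici 0) := by
      apply monotoneOn_of_hasDerivWithinAt_nonneg (convex_Ici 0)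
        (hcont_u.mul (Real.continuous_exp.comp_continuousOn (primitive_contOn hg2c)))
        (f' := fun x => Real.exp (∫ s in (0:ℝ)..x, (u s - r)) * (α * m x * w x))
      · intro x hx
        rw [interior_Ici] at hx ⊢
        have h1 := (huDA x hx).mul ((ftc_at' hg2c hx).exp)
        refine (HasDerivAt.hasDerivWithinAt ?_)
        convert h1 using 1
        · rfl
        · rfl
        ring
      · intro x hx
        rw [interior_Ici] at hx
        have := hm_pos x hx.le
        have := hw_nonneg x
        positivity
    have h0le : (fun v => u v * Real.exp (∫ s in (0:ℝ)..v, (u s - r))) 0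
        ≤ (fun v => u v * Real.exp (∫ s in (0:ℝ)..v, (u s - r))) t :=
      hmono (self_mem_Ici) ht ht
    simp only [intervalIntegral.integral_same, Real.exp_zero, mul_one] at h0le
    nlinarith [Real.exp_pos (∫ s in (0:ℝ)..t, (u s - r)), hu0pos]
  -- Cauchy–Schwarz
  have hCS : ∀ s, 0 ≤ s → u s * u s ≤ m s * w s := by
    intro s hs
    have hm := hm_pos s hs
    set c : ℝ := u s / m s with hc_def
    have h0 : (0:ℝ) ≤ ∫ x, ((x:ℝ) - c) * ((x:ℝ) - c)
        ∂(μ s : Measure (Set.Icc (0:ℝ) A)) :=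
      integral_nonneg (fun x => mul_self_nonneg _)
    have hint_xx : Integrable (fun x : Set.Icc (0:ℝ) A => (x:ℝ) * (x:ℝ))
        ((μ s : Measure (Set.Icc (0:ℝ) A))) :=
      intC (μ s) _ (continuous_subtype_val.mul continuous_subtype_val)
    have hint_x : Integrable (fun x : Set.Icc (0:ℝ) A => (-(2*c)) * (x:ℝ))
        ((μ s : Measure (Set.Icc (0:ℝ) A))) :=
      (intC (μ s) _ continuous_subtype_val).const_mul _
    have hint_c : Integrable (fun _x : Set.Icc (0:ℝ) A => c * c)
        ((μ s : Measure (Set.Icc (0:ℝ) A))) := integrable_const _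
    have hexp : (∫ x, ((x:ℝ) - c) * ((x:ℝ) - c)
        ∂(μ s : Measure (Set.Icc (0:ℝ) A)))
        = w s + ((-(2*c)) * u s + c * c * m s) := by
      rw [show (fun x : Set.Icc (0:ℝ) A => ((x:ℝ) - c) * ((x:ℝ) - c))
          = fun x : Set.Icc (0:ℝ) A => (x:ℝ) * (x:ℝ)
            + ((-(2*c)) * (x:ℝ) + c * c) from funext (fun x => by ring)]
      have hint_xc : Integrable (fun x : Set.Icc (0:ℝ) A => (-(2*c)) * (x:ℝ) + c * c)
          ((μ s : Measure (Set.Icc (0:ℝ) A))) := hint_x.add hint_c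
      rw [integral_add hint_xx hint_xc, integral_add hint_x hint_c,
        integral_const_mul]
      congr 2
      rw [show (fun _x : Set.Icc (0:ℝ) A => c * c)
          = fun _x : Set.Icc (0:ℝ) A => (c * c) * 1 from funext (fun x => by ring)]
      rw [integral_const_mul, hmass_int s]
    rw [hexp] at h0
    have hsimp : w s + ((-(2*c)) * u s + c * c * m s) = w s - u s * u s / m s := by
      rw [hc_def]; field_simp; ring
    rw [hsimp, sub_nonneg] at h0
    calc u s * u s = (u s * u s / m s) * m s := by field_simp
    _ ≤ w s * m s := mul_le_mul_of_nonneg_right h0 hm.le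
    _ = m s * w s := by ring
  -- the normalized first moment is monotone
  have hq_cont : ContinuousOn (fun t => u t / m t) (Ici 0) :=
    hcont_u.div hcont_m (fun t ht => (hm_pos t ht).ne')
  have hq_mono : MonotoneOn (fun t => u t / m t) (Ici 0) := by
    apply monotoneOn_of_hasDerivWithinAt_nonneg (convex_Ici 0) hq_cont
      (f' := fun x => ((r * u x + α * m x * w x - u x * u x) * m x
        - u x * ((r - (1 - α) * u x) * m x)) / (m x) ^ 2)
    · intro x hx
      rw [interior_Ici] at hx ⊢
      exact ((huDA x hx).div (hmDA x hx) (hm_pos x hx.le).ne').hasDerivWithinAt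
    · intro x hx
      rw [interior_Ici] at hx
      apply div_nonneg _ (sq_nonneg _)
      have h1 : (r * u x + α * m x * w x - u x * u x) * m x
          - u x * ((r - (1 - α) * u x) * m x)
          = α * m x * (m x * w x - u x * u x) := by ring
      rw [h1]
      exact mul_nonneg (mul_nonneg hα.le (hm_pos x hx.le).le)
        (by linarith [hCS x hx.le])
  -- q is bounded above by A
  have hq_bdd : ∀ t, 0 ≤ t → u t / m t ≤ A := by
    intro t ht
    have h1 : u t ≤ A * m t := by
      have h2 : u t ≤ ∫ _x, A ∂(μ t : Measure (Set.Icc (0:ℝ) A)) := by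
        apply integral_mono (intC (μ t) _ continuous_subtype_val) (integrable_const A)
        intro x; exact x.2.2
      have h3 : (∫ _x, A ∂(μ t : Measure (Set.Icc (0:ℝ) A))) = A * m t := by
        rw [show (fun _x : Set.Icc (0:ℝ) A => A) = fun _x : Set.Icc (0:ℝ) A => A * 1
          from funext (fun x => by ring)]
        rw [integral_const_mul, hmass_int t]
      linarith [h2, h3.le, h3.ge]
    rw [div_le_iff₀ (hm_pos t ht)]
    linarith
  -- the limit of the normalized moment
  have hQmono : Monotone (fun t => u (max t 0) / m (max t 0)) := by
    intro a b hab
    exact hq_mono (mem_Ici.2 (le_max_right a 0)) (mem_Ici.2 (le_max_right b 0))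
      (max_le_max hab le_rfl)
  have hQbdd : BddAbove (range (fun t => u (max t 0) / m (max t 0))) := by
    refine ⟨A, ?_⟩
    rintro y ⟨t, rfl⟩
    exact hq_bdd _ (le_max_right t 0)
  have hQtend : Tendsto (fun t => u (max t 0) / m (max t 0)) atTop
      (nhds (⨆ t, u (max t 0) / m (max t 0))) := tendsto_atTop_ciSup hQmono hQbdd
  set qinf : ℝ := ⨆ t, u (max t 0) / m (max t 0) with hqinf_def
  have hqinf_pos : 0 < qinf := by
    have h1 : u (max 0 0) / m (max 0 0) ≤ qinf := le_ciSup hQbdd 0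
    have h2 : u (max 0 0) / m (max 0 0) = u 0 := by
      simp [hm0]
    rw [h2] at h1
    linarith [hu0pos]
  have hq_tendsto : Tendsto (fun t => u t / m t) atTop (nhds qinf) := by
    apply hQtend.congr'
    filter_upwards [eventually_ge_atTop (0:ℝ)] with t ht
    rw [max_eq_left ht]
  -- identity : exp(rt)/m(t) = 1 + (1-α) ∫₀ᵗ exp(rs) q(s) ds
  have hqexp_cont : ContinuousOn (fun s => Real.exp (r * s) * (u s / m s)) (Ici 0) :=
    ((Real.continuous_exp.comp (continuous_const.mul continuous_id)).continuousOn).mul hq_cont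
  have hIdent : ∀ t, 0 ≤ t → Real.exp (r * t) * (m t)⁻¹
      = 1 + (1 - α) * ∫ s in (0:ℝ)..t, Real.exp (r * s) * (u s / m s) := by
    intro t ht
    have key := eq_of_has_deriv_right_eq (a := 0) (b := t)
      (f := fun v => Real.exp (r * v) * (m v)⁻¹)
      (g := fun v => 1 + (1 - α) * ∫ s in (0:ℝ)..v, Real.exp (r * s) * (u s / m s))
      (f' := fun x => (1 - α) * (Real.exp (r * x) * (u x / m x)))
      (fun x hx => by
        have hmx := (hm_pos x hx.1).ne'
        have hexp : HasDerivAt (fun v : ℝ => Real.exp (r * v)) (Real.exp (r * x) * r) x := by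
          simpa using (((hasDerivAt_id x).const_mul r).exp)
        have h1 := (hexp.hasDerivWithinAt (s := Ici x)).mul ((hmDR x hx.1).inv hmx)
        convert h1 using 1
        · rfl
        · rfl
        rw [Pi.inv_apply]
        field_simp
        ring)
      (fun x hx => ((ftc_right' hqexp_cont hx.1).const_mul (1 - α)).const_add 1)
      (((Real.continuous_exp.comp (continuous_const.mul continuous_id)).continuousOn.mul
        (hcont_m.inv₀ (fun y hy => (hm_pos y hy).ne'))).mono Icc_subset_Ici_self)
      ((continuousOn_const.add (continuousOn_const.mul
        (primitive_contOn hqexp_cont))).mono Icc_subset_Ici_self)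
      (by simp [hm0])
    exact key t ⟨ht, le_rfl⟩
  -- passing to the limit
  have hexp0 : Tendsto (fun t : ℝ => Real.exp (-(r * t))) atTop (nhds 0) :=
    Real.tendsto_exp_neg_atTop_nhds_zero.comp (Filter.Tendsto.const_mul_atTop hr tendsto_id)
  have hAvg := avg_limit hr hq_cont hq_tendsto
  have hD_tend : Tendsto (fun t => Real.exp (-(r * t))
      * (1 + (1 - α) * ∫ s in (0:ℝ)..t, Real.exp (r * s) * (u s / m s))) atTop
      (nhds ((1 - α) * (qinf / r))) := by
    have h := hexp0.add (hAvg.const_mul (1 - α))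
    rw [zero_add] at h
    exact h.congr (fun t => by ring)
  have hL_pos : 0 < (1 - α) * (qinf / r) := by positivity
  have hval : qinf / ((1 - α) * (qinf / r)) = r / (1 - α) := by
    field_simp
  have hmain : Tendsto (fun t => (u t / m t) / (Real.exp (-(r * t))
      * (1 + (1 - α) * ∫ s in (0:ℝ)..t, Real.exp (r * s) * (u s / m s)))) atTop
      (nhds (r / (1 - α))) := by
    rw [← hval]
    exact hq_tendsto.div hD_tend hL_pos.ne'
  apply hmain.congr'
  filter_upwards [eventually_ge_atTop (0:ℝ)] with t ht
  have hmx := (hm_pos t ht).ne'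
  have hD : Real.exp (-(r * t))
      * (1 + (1 - α) * ∫ s in (0:ℝ)..t, Real.exp (r * s) * (u s / m s)) = (m t)⁻¹ := by
    rw [← hIdent t ht, ← mul_assoc, ← Real.exp_add]
    simp
  rw [hD]
  field_simp
end

section
/- Let μ₀ be a finite nonnegative Borel measure on a measurable space X, let r : X → ℝ be a Borel function with 0 < r_m ≤ r(x) ≤ r_M for all x ∈ X, and let S ⊆ X be a measurable set on which r ≡ r_M. Then for every t ≥ 0, 1 + ∫_X (e^{r(x)t} − 1)/r(x) dμ₀(x) ≥ min(1, μ₀(S)/r_M) · e^{r_M t}. -/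
open MeasureTheory

/-- If `0 < r_m ≤ r(x) ≤ r_M` and `r ≡ r_M` on a measurable set `S`,
then for every `t ≥ 0`,
`1 + ∫ (e^{r(x)t} − 1)/r(x) dμ₀ ≥ min(1, μ₀(S)/r_M) e^{r_M t}`. -/
theorem denominator_lower_bound {X : Type*} [MeasurableSpace X]
    (μ₀ : Measure X) [IsFiniteMeasure μ₀]
    (r : X → ℝ) (hr_meas : Measurable r)
    (rm rM : ℝ) (hrm_pos : 0 < rm) (hrm : ∀ x, rm ≤ r x) (hrM : ∀ x, r x ≤ rM)
    (S : Set X) (hS : MeasurableSet S) (hrS : ∀ x ∈ S, r x = rM)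
    (t : ℝ) (ht : 0 ≤ t) :
    min 1 ((μ₀ S).toReal / rM) * Real.exp (rM * t)
      ≤ 1 + ∫ x, (Real.exp (r x * t) - 1) / r x ∂μ₀ := by
  set f : X → ℝ := fun x => (Real.exp (r x * t) - 1) / r x with hf
  have hrpos : ∀ x, 0 < r x := fun x => lt_of_lt_of_le hrm_pos (hrm x)
  have hfnonneg : ∀ x, 0 ≤ f x := by
    intro x
    apply div_nonneg _ (hrpos x).le
    have : (0:ℝ) ≤ r x * t := mul_nonneg (hrpos x).le ht
    simpa using Real.one_le_exp this
  -- integrability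
  have hfmeas : Measurable f := by
    apply Measurable.div
    · exact ((hr_meas.mul_const t).exp).sub measurable_const
    · exact hr_meas
  have hfbound : ∀ x, |f x| ≤ (Real.exp (rM * t) - 1) / rm := by
    intro x
    rw [abs_of_nonneg (hfnonneg x)]
    apply div_le_div₀
    · have : (0:ℝ) ≤ rM * t := mul_nonneg (lt_of_lt_of_le hrm_pos ((hrm x).trans (hrM x))).le ht
      have := Real.one_le_exp this
      linarith
    · have : r x * t ≤ rM * t := mul_le_mul_of_nonneg_right (hrM x) ht
      have := Real.exp_le_exp.mpr this
      linarith
    · exact hrm_pos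
    · exact hrm x
  have hint : Integrable f μ₀ := by
    refine Integrable.mono' (integrable_const ((Real.exp (rM * t) - 1) / rm))
      hfmeas.aestronglyMeasurable (Filter.Eventually.of_forall hfbound)
  rcases Set.eq_empty_or_nonempty S with hSe | ⟨x₀, hx₀⟩
  · subst hSe
    simp only [measure_empty, ENNReal.toReal_zero, zero_div, min_eq_right (zero_le_one' ℝ),
      zero_mul]
    have : 0 ≤ ∫ x, f x ∂μ₀ := integral_nonneg hfnonneg
    linarith
  · have hrMpos : 0 < rM := (hrS x₀ hx₀) ▸ hrpos x₀
    have he1 : (0:ℝ) ≤ Real.exp (rM * t) - 1 := by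
      have : (0:ℝ) ≤ rM * t := mul_nonneg hrMpos.le ht
      simpa using Real.one_le_exp this
    set a : ℝ := (μ₀ S).toReal / rM with ha
    have hanonneg : 0 ≤ a := div_nonneg ENNReal.toReal_nonneg hrMpos.le
    -- set integral bound
    have hset : ∫ x in S, f x ∂μ₀ = (μ₀ S).toReal * ((Real.exp (rM * t) - 1) / rM) := by
      rw [setIntegral_congr_fun hS (g := fun _ => (Real.exp (rM * t) - 1) / rM)]
      · simp [Measure.restrict_apply_univ, mul_comm]
        exact Or.inl rfl
      · intro x hx
        simp [hf, hrS x hx]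
    have hle : ∫ x in S, f x ∂μ₀ ≤ ∫ x, f x ∂μ₀ :=
      setIntegral_le_integral hint (Filter.Eventually.of_forall hfnonneg)
    have key : a * (Real.exp (rM * t) - 1) ≤ ∫ x, f x ∂μ₀ := by
      have : a * (Real.exp (rM * t) - 1) = (μ₀ S).toReal * ((Real.exp (rM * t) - 1) / rM) := by
        field_simp [ha]
        rw [ha, div_mul_cancel₀ _ hrMpos.ne']; ring
      rw [this, ← hset]; exact hle
    have hmin1 : min 1 a ≤ 1 := min_le_left _ _
    have hmina : min 1 a ≤ a := min_le_right _ _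
    have hminnn : 0 ≤ min 1 a := le_min zero_le_one hanonneg
    nlinarith [key, mul_le_mul_of_nonneg_right hmina he1]
end
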